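/- arXiv:2410.07650 — 7 statements merged into one kernel-verified Lean document; each statement's English description precedes it below -/
import Mathlib

section
/- Let S be a spanning (n,r,s) system, i.e., a multiset of n lines in PG(r-1,2) such that each hyperplane contains at most s elements of S, some hyperplane contains exactly s, and s < n. Let P(S) be the multiset of 3n points obtained by replacing each line by its three points. Then the binary linear code corresponding to P(S) is a 2-divisible [3n, r, 2(n-s)]_2 code whose maximum codeword weight is at most 2n. -/
/-!
For `x ∈ F₂^r` the codeword `c_x` has the coordinates `⟨x, p⟩`, `p ∈ P(S)`. A line inside the
hyperplane `x^⊥` contributes no nonzero coordinate, and any other line exactly two of its three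
points, so `wt(c_x) = 2 (n - #{L ∈ S | L ≤ x^⊥})`. Evenness and `wt ≤ 2n` are immediate; for
`x ≠ 0` at most `s` lines lie in `x^⊥`, which gives the minimum distance and the injectivity of
`x ↦ c_x` (hence dimension `r`), and a hyperplane holding exactly `s` lines attains it.
-/

/-- The ambient vector space `F_2^r`. -/
abbrev Vec (r : ℕ) := Fin r → ZMod 2

/-- A line of `PG(r-1,2)`: a 2-dimensional subspace of `F_2^r`. -/
def isLine {r : ℕ} (L : Submodule (ZMod 2) (Vec r)) : Prop :=
  Module.finrank (ZMod 2) L = 2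

/-- A point of `PG(r-1,2)`: a 1-dimensional subspace of `F_2^r`. -/
def isPoint {r : ℕ} (P : Submodule (ZMod 2) (Vec r)) : Prop :=
  Module.finrank (ZMod 2) P = 1

/-- A hyperplane of `PG(r-1,2)`: an `(r-1)`-dimensional subspace of `F_2^r`. -/
def isHyperplane {r : ℕ} (H : Submodule (ZMod 2) (Vec r)) : Prop :=
  Module.finrank (ZMod 2) H = r - 1

open scoped Classical in
/-- The number of members of the multiset `S` (of lines) contained in the subspace `H`. -/
noncomputable def linesIn {r : ℕ} (S : Multiset (Submodule (ZMod 2) (Vec r)))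
    (H : Submodule (ZMod 2) (Vec r)) : ℕ :=
  Multiset.card (S.filter (fun L => L ≤ H))

/-- An `(n,r,s)` system: a multiset of `n` lines of `PG(r-1,2)` such that every hyperplane
contains at most `s` of them and some hyperplane contains exactly `s` of them. -/
def IsSystem (r n s : ℕ) (S : Multiset (Submodule (ZMod 2) (Vec r))) : Prop :=
  Multiset.card S = n ∧ (∀ L ∈ S, isLine L) ∧
    (∀ H, isHyperplane H → linesIn S H ≤ s) ∧
    (∃ H, isHyperplane H ∧ linesIn S H = s)


open scoped Classical in
/-- The multiset of the three nonzero vectors (= points) of a line `L`. -/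
noncomputable def pointsOf {r : ℕ} (L : Submodule (ZMod 2) (Vec r)) : Multiset (Vec r) :=
  (Finset.univ.filter (fun v : Vec r => v ∈ L ∧ v ≠ 0)).val

/-- The multiset `P(S)` of points obtained by replacing each line of `S` by its three points. -/
noncomputable def pointMultiset {r : ℕ} (S : Multiset (Submodule (ZMod 2) (Vec r))) :
    Multiset (Vec r) :=
  S.bind pointsOf

/-- The binary linear code whose generator matrix has the vectors `pts j` as columns. -/
noncomputable def codeOf {r m : ℕ} (pts : Fin m → Vec r) :
    Submodule (ZMod 2) (Fin m → ZMod 2) :=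
  LinearMap.range (Matrix.mulVecLin (Matrix.of fun j i => pts j i))

open Module Finset

open scoped Classical

section

variable {K V : Type*} [Field K] [AddCommGroup V] [Module K V]

theorem card_filter_mem_submodule [Fintype K] [Fintype V] (W : Submodule K V) :
    #{v | v ∈ W} = Fintype.card K ^ finrank K W := by
  rw [← Fintype.card_subtype, card_eq_pow_finrank (K := K)]

theorem finrank_inf_ker_add_one_of_not_le [FiniteDimensional K V] {L : Submodule K V}
    {f : Dual K V} (hLf : ¬ L ≤ LinearMap.ker f) :
    finrank K (L ⊓ LinearMap.ker f : Submodule K V) + 1 = finrank K L := by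
  have hf : f.domRestrict L ≠ 0 := by
    contrapose! hLf
    intro v hv
    simpa using LinearMap.congr_fun hLf ⟨v, hv⟩
  rw [← Submodule.map_comap_subtype, Submodule.finrank_map_subtype_eq,
    ← LinearMap.ker_domRestrict]
  exact Dual.finrank_ker_add_one_of_ne_zero hf

end

theorem card_filter_mem_and_apply_ne_zero {V : Type*} [AddCommGroup V] [Module (ZMod 2) V]
    [Fintype V] {L : Submodule (ZMod 2) V} (hL : finrank (ZMod 2) L = 2) (f : Dual (ZMod 2) V) :
    #{v | v ∈ L ∧ f v ≠ 0} = if L ≤ LinearMap.ker f then 0 else 2 := by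
  have hdisj : Disjoint (univ.filter fun v => v ∈ L ∧ f v ≠ 0)
      (univ.filter fun v => v ∈ (L ⊓ LinearMap.ker f : Submodule _ V)) :=
    disjoint_filter.mpr fun v _ h h' => h.2 (Submodule.mem_inf.mp h').2
  have hsplit :
      #{v | v ∈ L ∧ f v ≠ 0} + #{v | v ∈ (L ⊓ LinearMap.ker f : Submodule _ V)} =
        #{v | v ∈ L} := by
    rw [← card_union_of_disjoint hdisj]
    congr 1
    ext v
    simp only [mem_union, mem_filter, mem_univ, true_and, Submodule.mem_inf, LinearMap.mem_ker]
    tauto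
  rw [card_filter_mem_submodule, card_filter_mem_submodule, hL, ZMod.card] at hsplit
  split_ifs with hLf
  · rw [inf_eq_left.mpr hLf, hL] at hsplit
    omega
  · have hinf := finrank_inf_ker_add_one_of_not_le hLf
    rw [hL] at hinf
    rw [show finrank (ZMod 2) (L ⊓ LinearMap.ker f : Submodule _ V) = 1 by omega] at hsplit
    omega

section

variable {r : ℕ}

theorem isHyperplane_ker {f : Dual (ZMod 2) (Vec r)} (hf : f ≠ 0) :
    isHyperplane (LinearMap.ker f) := by
  have := Dual.finrank_ker_add_one_of_ne_zero hf
  rw [finrank_fin_fun] at this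
  rw [isHyperplane]
  omega

-- `H ≠ ⊤` excludes `r = 0`, where the truncated `r - 1` makes `⊤` a "hyperplane".
theorem exists_ker_eq_of_isHyperplane {H : Submodule (ZMod 2) (Vec r)} (hH : isHyperplane H)
    (hH_top : H ≠ ⊤) : ∃ f : Dual (ZMod 2) (Vec r), f ≠ 0 ∧ LinearMap.ker f = H := by
  obtain ⟨f, hf, hHf⟩ :=
    Submodule.exists_dual_map_eq_bot_of_lt_top (lt_top_iff_ne_top.mpr hH_top) inferInstance
  refine ⟨f, hf, (Submodule.eq_of_le_of_finrank_eq (LinearMap.le_ker_iff_map.mpr hHf) ?_).symm⟩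
  have := Dual.finrank_ker_add_one_of_ne_zero hf
  rw [finrank_fin_fun] at this
  rw [hH]
  omega

theorem linesIn_top (S : Multiset (Submodule (ZMod 2) (Vec r))) :
    linesIn S ⊤ = Multiset.card S := by
  simp [linesIn]

theorem countP_pointsOf {L : Submodule (ZMod 2) (Vec r)} (hL : isLine L)
    (f : Dual (ZMod 2) (Vec r)) :
    (pointsOf L).countP (fun v => f v ≠ 0) = if L ≤ LinearMap.ker f then 0 else 2 := by
  rw [← card_filter_mem_and_apply_ne_zero hL, pointsOf, Multiset.countP_eq_card_filter,
    ← filter_val, filter_filter, card_val]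
  congr 1
  refine filter_congr fun v _ => ⟨fun h => ⟨h.1.1, h.2⟩, fun h => ⟨⟨h.1, ?_⟩, h.2⟩⟩
  rintro rfl
  exact h.2 (map_zero f)

theorem countP_pointMultiset {S : Multiset (Submodule (ZMod 2) (Vec r))}
    (hS : ∀ L ∈ S, isLine L) (f : Dual (ZMod 2) (Vec r)) :
    (pointMultiset S).countP (fun v => f v ≠ 0) =
      2 * (Multiset.card S - linesIn S (LinearMap.ker f)) := by
  induction S using Multiset.induction_on with
  | empty => simp [pointMultiset, linesIn]
  | cons L S ih =>
    have hle : linesIn S (LinearMap.ker f) ≤ Multiset.card S :=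
      Multiset.card_le_card (Multiset.filter_le _ _)
    rw [pointMultiset, Multiset.cons_bind, Multiset.countP_add, ← pointMultiset,
      countP_pointsOf (hS L (Multiset.mem_cons_self L S)),
      ih fun L' hL' => hS L' (Multiset.mem_cons_of_mem hL')]
    simp only [linesIn, Multiset.filter_cons, Multiset.card_cons] at hle ⊢
    split_ifs <;> simp only [Multiset.card_add, Multiset.card_singleton, Multiset.card_zero] <;>
      omega

theorem hammingNorm_apply_eq {m : ℕ} {S : Multiset (Submodule (ZMod 2) (Vec r))}
    (hS : ∀ L ∈ S, isLine L) {pts : Fin m → Vec r}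
    (hpts : (univ.val : Multiset (Fin m)).map pts = pointMultiset S)
    (f : Dual (ZMod 2) (Vec r)) :
    hammingNorm (fun j => f (pts j)) = 2 * (Multiset.card S - linesIn S (LinearMap.ker f)) := by
  rw [← countP_pointMultiset hS f, ← hpts, Multiset.countP_map]
  rfl

theorem mulVecLin_of_eq {m : ℕ} (pts : Fin m → Vec r) (x : Vec r) :
    (Matrix.of fun j i => pts j i).mulVecLin x =
      fun j => dotProductEquiv (ZMod 2) (Fin r) x (pts j) := by
  ext j
  simp [Matrix.mulVec, dotProduct_comm]

end

/-- If `S` is a spanning `(n,r,s)` system, then the binary linear code corresponding to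
`P(S)` is a `2`-divisible `[3n, r, 2(n-s)]_2` code with maximum weight at most `2n`. -/
theorem system_code_parameters {r n s : ℕ}
    (S : Multiset (Submodule (ZMod 2) (Vec r)))
    (hS : IsSystem r n s S) (hspan : s < n)
    (pts : Fin (3 * n) → Vec r)
    (hpts : (Finset.univ.val : Multiset (Fin (3 * n))).map pts = pointMultiset S) :
    Module.finrank (ZMod 2) (codeOf pts) = r ∧
    (∀ c ∈ codeOf pts, 2 ∣ hammingNorm c) ∧
    (∀ c ∈ codeOf pts, c ≠ 0 → 2 * (n - s) ≤ hammingNorm c) ∧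
    (∃ c ∈ codeOf pts, c ≠ 0 ∧ hammingNorm c = 2 * (n - s)) ∧
    (∀ c ∈ codeOf pts, hammingNorm c ≤ 2 * n) := by
  obtain ⟨hcard, hlines, hmax, H₀, hH₀, hH₀s⟩ := hS
  set G := (Matrix.of fun j i => pts j i).mulVecLin
  set φ := dotProductEquiv (ZMod 2) (Fin r)
  have weight (x : Vec r) : hammingNorm (G x) = 2 * (n - linesIn S (LinearMap.ker (φ x))) := by
    rw [mulVecLin_of_eq, hammingNorm_apply_eq hlines hpts, hcard]
  have linesIn_le {x : Vec r} (hx : x ≠ 0) : linesIn S (LinearMap.ker (φ x)) ≤ s :=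
    hmax _ (isHyperplane_ker (by simpa using hx))
  have hG : Function.Injective G := by
    refine (injective_iff_map_eq_zero G).mpr fun x hx => by_contra fun hx0 => ?_
    have := weight x
    rw [hx, hammingNorm_zero] at this
    have := linesIn_le hx0
    omega
  refine ⟨?_, ?_, ?_, ?_, ?_⟩
  · rw [codeOf, LinearMap.finrank_range_of_inj hG, finrank_fin_fun]
  · rintro _ ⟨x, rfl⟩
    exact weight x ▸ dvd_mul_right _ _
  · rintro _ ⟨x, rfl⟩ hx
    have := linesIn_le (x := x) fun hx0 => hx (by rw [hx0, map_zero])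
    rw [weight]
    omega
  · have hH₀_top : H₀ ≠ ⊤ := by
      rintro rfl
      rw [linesIn_top, hcard] at hH₀s
      omega
    obtain ⟨f, hf, rfl⟩ := exists_ker_eq_of_isHyperplane hH₀ hH₀_top
    refine ⟨G (φ.symm f), ⟨_, rfl⟩, (map_ne_zero_iff G hG).mpr (by simpa using hf), ?_⟩
    rw [weight, LinearEquiv.apply_symm_apply, hH₀s]
  · rintro _ ⟨x, rfl⟩
    rw [weight]
    omega
end

section
/- Let k and d be positive integers and write d = σ·2^{k-1} − Σ_{i=1}^{k-1} ε_i·2^{i-1} with σ a nonnegative integer and each ε_i ∈ {0,1}. Then the Griesmer bound g(k,d) = Σ_{i=0}^{k-1} ⌈d/2^i⌉ equals σ·(2^k − 1) − Σ_{i=1}^{k-1} ε_i·(2^i − 1). -/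
/-- The Griesmer bound `g(k,d) = ∑_{i=0}^{k-1} ⌈d/2^i⌉` for binary linear codes. -/
def griesmer (k d : ℕ) : ℕ := ∑ i ∈ Finset.range k, (d + 2 ^ i - 1) / 2 ^ i

/-! Since `⌈⌈d/2⌉/2^i⌉ = ⌈d/2^(i+1)⌉`, we have `g(k+1, d) = d + g(k, ⌈d/2⌉)`. Halving
`d = σ·2^(k-1) - ∑ ε_i 2^(i-1)` and rounding up deletes the digit `ε_1` and shifts the other
digits down, so `⌈d/2⌉` has a representation of the same shape with `k - 1` in place of `k`, and
the formula follows by induction on `k`. -/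

open Finset

theorem Nat.ceilDiv_ceilDiv {a b : ℕ} (ha : 0 < a) (hb : 0 < b) (d : ℕ) :
    d ⌈/⌉ a ⌈/⌉ b = d ⌈/⌉ (a * b) := by
  simp only [Nat.ceilDiv_eq_add_pred_div]
  have hnum : (d + a - 1) / a + (b - 1) = (d + a * b - 1) / a := by
    rw [← Nat.add_mul_div_left _ _ ha]
    congr 1
    have : a ≤ a * b := Nat.le_mul_of_pos_right a hb
    rw [Nat.mul_sub_one]
    omega
  rw [Nat.add_sub_assoc hb, hnum, Nat.div_div_eq_div_mul]

theorem griesmer_succ (k d : ℕ) : griesmer (k + 1) d = d + griesmer k (d ⌈/⌉ 2) := by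
  unfold griesmer
  rw [sum_range_succ', add_comm]
  congr 1
  · simp
  · refine sum_congr rfl fun i _ => ?_
    rw [pow_succ']
    exact (Nat.ceilDiv_ceilDiv two_pos (Nat.two_pow_pos i) d).symm

theorem griesmer_succ_add_sum (n d σ : ℕ) (e : ℕ → ℕ) (he : ∀ j, e j ≤ 1)
    (hrep : d + ∑ j ∈ range n, e j * 2 ^ j = σ * 2 ^ n) :
    griesmer (n + 1) d + ∑ j ∈ range n, e j * (2 ^ (j + 1) - 1) = σ * (2 ^ (n + 1) - 1) := by
  induction n generalizing d e with
  | zero => simp_all [griesmer]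
  | succ n ih =>
    set S := ∑ j ∈ range n, e (j + 1) * 2 ^ j
    set W := ∑ j ∈ range n, e (j + 1) * (2 ^ (j + 1) - 1)
    have hsum_pow : ∑ j ∈ range (n + 1), e j * 2 ^ j = 2 * S + e 0 := by
      rw [sum_range_succ', mul_sum]
      simp only [pow_succ, pow_zero, mul_one]
      congr 1
      exact sum_congr rfl fun j _ => by ring
    have hsum_weight : ∑ j ∈ range (n + 1), e j * (2 ^ (j + 1) - 1) = W + 2 * S + e 0 := by
      rw [sum_range_succ', mul_sum, ← sum_add_distrib]
      congr 1
      · refine sum_congr rfl fun j _ => ?_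
        have : 2 ^ (j + 1 + 1) - 1 = 2 ^ (j + 1) - 1 + 2 * 2 ^ j := by
          have := Nat.one_le_two_pow (n := j)
          rw [pow_succ, pow_succ]
          omega
        rw [this]
        ring
      · simp
    rw [hsum_pow, pow_succ, ← mul_assoc] at hrep
    have hhalf : d ⌈/⌉ 2 + S = σ * 2 ^ n := by
      have := he 0
      rw [Nat.ceilDiv_eq_add_pred_div]
      omega
    have hhalf_sum := ih (d ⌈/⌉ 2) (fun j => e (j + 1)) (fun j => he _) hhalf
    have hσ : σ ≤ σ * 2 ^ n := Nat.le_mul_of_pos_right σ (Nat.two_pow_pos n)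
    rw [pow_succ 2 n, Nat.mul_sub_one, ← mul_assoc] at hhalf_sum
    rw [griesmer_succ, hsum_weight, pow_succ 2 (n + 1), pow_succ 2 n, Nat.mul_sub_one,
      ← mul_assoc, ← mul_assoc]
    omega

theorem sum_Icc_one_eq_sum_range {M : Type*} [AddCommMonoid M] (f : ℕ → M) (n : ℕ) :
    ∑ i ∈ Icc 1 n, f i = ∑ j ∈ range n, f (j + 1) := by
  rw [← Ico_add_one_right_eq_Icc, sum_Ico_eq_sum_range, Nat.add_sub_cancel]
  simp only [add_comm]

theorem griesmer_explicit_general (k d : ℕ) (hk : 0 < k)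
    (σ : ℕ) (ε : ℕ → ℕ) (hε : ∀ i, ε i ≤ 1)
    (hrep : d + ∑ i ∈ Finset.Icc 1 (k - 1), ε i * 2 ^ (i - 1) = σ * 2 ^ (k - 1)) :
    griesmer k d + ∑ i ∈ Finset.Icc 1 (k - 1), ε i * (2 ^ i - 1) = σ * (2 ^ k - 1) := by
  obtain ⟨n, rfl⟩ := Nat.exists_eq_add_one_of_ne_zero hk.ne'
  simp only [Nat.add_sub_cancel, sum_Icc_one_eq_sum_range] at hrep ⊢
  exact griesmer_succ_add_sum n d σ (fun j => ε (j + 1)) (fun j => hε _) hrep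

/-- If `d = σ·2^{k-1} - ∑_{i=1}^{k-1} ε_i·2^{i-1}` with `σ ∈ ℕ` and `ε_i ∈ {0,1}`, then
`g(k,d) = σ·(2^k - 1) - ∑_{i=1}^{k-1} ε_i·(2^i - 1)` (stated additively over `ℕ`). -/
theorem griesmer_explicit (k d : ℕ) (hk : 0 < k) (hd : 0 < d)
    (σ : ℕ) (ε : ℕ → ℕ) (hε : ∀ i, ε i ≤ 1)
    (hrep : d + ∑ i ∈ Finset.Icc 1 (k - 1), ε i * 2 ^ (i - 1) = σ * 2 ^ (k - 1)) :
    griesmer k d + ∑ i ∈ Finset.Icc 1 (k - 1), ε i * (2 ^ i - 1) = σ * (2 ^ k - 1) :=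
  griesmer_explicit_general k d hk σ ε hε hrep
end

section
/- For every integer r > 4 there exists a vector space partition of PG(r-1,2) consisting of 2^{r-2} pairwise disjoint 2-dimensional subspaces (lines) together with one (r-2)-dimensional subspace; that is, these subspaces cover every 1-dimensional subspace (point) of F_2^r exactly once. -/
open scoped Classical in
/-- The number of members of the multiset `𝒱` of subspaces containing the subspace `P`. -/
noncomputable def coverCount {r : ℕ} (𝒱 : Multiset (Submodule (ZMod 2) (Vec r)))
    (P : Submodule (ZMod 2) (Vec r)) : ℕ :=
  Multiset.card (𝒱.filter (fun W => P ≤ W))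

/-! Let `F = GF(2^(r-2))` and let `U ⊆ F` be a `2`-dimensional `F₂`-subspace. In `U × F ≅ F₂^r`
the graphs `{(u, a * u) | u ∈ U}`, `a ∈ F`, are lines (their generator matrices `[I₂ | M_a]`, with
`M_a` the matrix of multiplication by `a` on `U`, form an MRD code), and together with `0 × F`
they partition the nonzero vectors: `(u, w)` with `u ≠ 0` lies on the graph of `a = w / u` only. -/

open Module

section

variable {K V : Type*} [Field K] [AddCommGroup V] [Module K V]

open scoped Classical in
def IsExactCover (𝒱 : Multiset (Submodule K V)) : Prop :=
  ∀ v : V, v ≠ 0 → Multiset.card (𝒱.filter (v ∈ ·)) = 1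

theorem IsExactCover.map {W : Type*} [AddCommGroup W] [Module K W]
    {𝒱 : Multiset (Submodule K V)} (h : IsExactCover 𝒱) (e : V ≃ₗ[K] W) :
    IsExactCover (𝒱.map (Submodule.map (e : V →ₗ[K] W))) := by
  classical
  intro w hw
  simpa [Multiset.filter_map, Submodule.mem_map_equiv] using
    h (e.symm w) (e.symm.map_ne_zero_iff.mpr hw)

theorem exists_eq_span_singleton_of_finrank_eq_one {P : Submodule K V}
    (hP : finrank K P = 1) : ∃ u ≠ 0, P = K ∙ u := by
  obtain ⟨⟨u, hu⟩, hu0, hspan⟩ := finrank_eq_one_iff'.mp hP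
  refine ⟨u, by simpa using hu0,
    le_antisymm (fun w hw => ?_) ((Submodule.span_singleton_le_iff_mem u P).mpr hu)⟩
  obtain ⟨c, hc⟩ := hspan ⟨w, hw⟩
  exact Submodule.mem_span_singleton.mpr ⟨c, congrArg Subtype.val hc⟩

theorem Submodule.exists_finrank_eq {n : ℕ} (hn : n ≤ finrank K V) :
    ∃ U : Submodule K V, finrank K U = n := by
  obtain ⟨v, hv⟩ := exists_linearIndependent_of_le_finrank hn
  exact ⟨Submodule.span K (Set.range v), by rw [finrank_span_eq_card hv, Fintype.card_fin]⟩

theorem LinearMap.finrank_graph {W : Type*} [AddCommGroup W] [Module K W] (g : V →ₗ[K] W) :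
    finrank K g.graph = finrank K V := by
  rw [LinearMap.graph_eq_range_prod]
  exact LinearMap.finrank_range_of_inj fun x y h => congrArg Prod.fst h

end

theorem IsExactCover.coverCount_eq_one {r : ℕ} {𝒱 : Multiset (Submodule (ZMod 2) (Vec r))}
    (h : IsExactCover 𝒱) {P : Submodule (ZMod 2) (Vec r)} (hP : isPoint P) :
    coverCount 𝒱 P = 1 := by
  classical
  obtain ⟨u, hu, rfl⟩ := exists_eq_span_singleton_of_finrank_eq_one hP
  rw [coverCount, Multiset.filter_congr fun W _ => Submodule.span_singleton_le_iff_mem u W]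
  exact h u hu

section Spread

variable {K L U : Type*} [Field K] [Field L] [Algebra K L] [AddCommGroup U] [Module K U]
  {f : U →ₗ[K] L}

theorem existsUnique_mem_graph_smul (hf : Function.Injective f) {x : U × L} (hx : x.1 ≠ 0) :
    ∃! a : L, x ∈ (a • f).graph := by
  have hfx : f x.1 ≠ 0 := (map_ne_zero_iff f hf).mpr hx
  refine ⟨x.2 / f x.1, by simp [hfx], fun a ha => ?_⟩
  simp only [LinearMap.mem_graph_iff, LinearMap.smul_apply, smul_eq_mul] at ha
  rw [ha, mul_div_cancel_right₀ _ hfx]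

theorem isExactCover_range_inr_cons_graph_smul [Fintype L] (hf : Function.Injective f) :
    IsExactCover
      (LinearMap.range (LinearMap.inr K U L) ::ₘ Finset.univ.val.map fun a : L => (a • f).graph) := by
  classical
  rintro ⟨u, w⟩ hx
  simp only [Multiset.filter_cons, Multiset.card_add, Multiset.filter_map, Multiset.card_map,
    ← Finset.filter_val, Finset.card_val, Function.comp_def]
  rcases eq_or_ne u 0 with rfl | hu
  · have hw : w ≠ 0 := by simpa using hx
    simp [hw]
  · obtain ⟨a, ha, hunique⟩ := existsUnique_mem_graph_smul hf (x := (u, w)) hu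
    have hfilter : Finset.univ.filter (fun b : L => (u, w) ∈ (b • f).graph) = {a} :=
      Finset.eq_singleton_iff_unique_mem.mpr
        ⟨by simpa using ha, fun b hb => hunique b (by simpa using hb)⟩
    rw [hfilter, Finset.card_singleton]
    simp [hu.symm]

end Spread

/-- For every `r > 4` there is a vector space partition of `PG(r-1,2)` consisting of
`2^{r-2}` lines together with one `(r-2)`-dimensional subspace: every point is contained
in exactly one member. -/
theorem vsp_lines_and_big_subspace (r : ℕ) (hr : 4 < r) :
    ∃ (Ls : Multiset (Submodule (ZMod 2) (Vec r))) (A : Submodule (ZMod 2) (Vec r)),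
      Multiset.card Ls = 2 ^ (r - 2) ∧ (∀ L ∈ Ls, isLine L) ∧
      Module.finrank (ZMod 2) A = r - 2 ∧
      ∀ P, isPoint P → coverCount (A ::ₘ Ls) P = 1 := by
  set m := r - 2
  have hm : m ≠ 0 := by omega
  let := Fintype.ofFinite (GaloisField 2 m)
  obtain ⟨U, hU⟩ : ∃ U : Submodule (ZMod 2) (GaloisField 2 m), finrank (ZMod 2) U = 2 :=
    Submodule.exists_finrank_eq (by rw [GaloisField.finrank 2 hm]; omega)
  have hdim : finrank (ZMod 2) (U × GaloisField 2 m) = finrank (ZMod 2) (Vec r) := by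
    rw [finrank_prod, hU, GaloisField.finrank 2 hm, finrank_fin_fun]; omega
  let e := LinearEquiv.ofFinrankEq _ _ hdim
  have hcover := (isExactCover_range_inr_cons_graph_smul U.injective_subtype).map e
  rw [Multiset.map_cons] at hcover
  refine ⟨_, _, ?_, ?_, ?_, fun P hP => hcover.coverCount_eq_one hP⟩
  · simp [Finset.card_univ, ← Nat.card_eq_fintype_card, GaloisField.card 2 m hm]
  · simp only [Multiset.mem_map, Finset.mem_val, Finset.mem_univ, true_and]
    rintro _ ⟨_, ⟨a, rfl⟩, rfl⟩
    rw [isLine, LinearEquiv.finrank_map_eq, LinearMap.finrank_graph, hU]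
  · rw [LinearEquiv.finrank_map_eq, LinearMap.finrank_range_of_inj LinearMap.inr_injective,
      GaloisField.finrank 2 hm]
end

section
/- For integers r > a > 2 with r ≡ a (mod 2), there exists a vector space partition of PG(r-1,2) of type 2^{t_2} a^1 with t_2 = 2^a·(2^{r-a} − 1)/3, i.e., consisting of t_2 lines and one a-dimensional subspace that together cover every point exactly once. -/
namespace VSP

variable {a k : ℕ}

lemma zmod2_add_self (b : ZMod 2) : b + b = 0 := by
  have : ∀ c : ZMod 2, c + c = 0 := by decide
  exact this b

lemma zmod2_eq_of_add_eq_zero {b c : ZMod 2} (h : b + c = 0) : b = c := by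
  have : ∀ b c : ZMod 2, b + c = 0 → b = c := by decide
  exact this b c h


def chi (v : Vec (a + k)) : Vec a := fun i => v (Fin.castAdd k i)
def piy (v : Vec (a + k)) : Vec k := fun j => v (Fin.natAdd a j)
def glue (x : Vec a) (y : Vec k) : Vec (a + k) := fun i => Fin.addCases x y i

@[simp] lemma chi_glue (x : Vec a) (y : Vec k) : chi (glue x y) = x := by
  funext i; simp [chi, glue]

@[simp] lemma piy_glue (x : Vec a) (y : Vec k) : piy (glue x y) = y := by
  funext j; simp [piy, glue]

lemma ext_parts {v w : Vec (a + k)} (h1 : chi v = chi w) (h2 : piy v = piy w) : v = w := by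
  funext i
  cases i using Fin.addCases with
  | left i => exact congrFun h1 i
  | right j => exact congrFun h2 j

@[simp] lemma glue_parts (v : Vec (a + k)) : glue (chi v) (piy v) = v := by
  apply ext_parts <;> simp

@[simp] lemma chi_add (v w : Vec (a + k)) : chi (v + w) = chi v + chi w := rfl
@[simp] lemma piy_add (v w : Vec (a + k)) : piy (v + w) = piy v + piy w := rfl
@[simp] lemma chi_zero : chi (0 : Vec (a + k)) = 0 := rfl
@[simp] lemma piy_zero : piy (0 : Vec (a + k)) = 0 := rfl

def sig (x : Vec a) : Vec a := fun i =>
  if i.val = 0 then x ⟨a - 1, by have := i.isLt; omega⟩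
  else if i.val = 1 then x ⟨0, by have := i.isLt; omega⟩ + x ⟨a - 1, by have := i.isLt; omega⟩
  else x ⟨i.val - 1, by have := i.isLt; omega⟩

def tau (y : Vec k) : Vec k := fun j =>
  if j.val % 2 = 0 then (if h : j.val + 1 < k then y ⟨j.val + 1, h⟩ else 0)
  else y ⟨j.val - 1, by have := j.isLt; omega⟩ + y j

def T (v : Vec (a + k)) : Vec (a + k) := glue (sig (chi v)) (tau (piy v))

@[simp] lemma chi_T (v : Vec (a + k)) : chi (T v) = sig (chi v) := by simp [T]
@[simp] lemma piy_T (v : Vec (a + k)) : piy (T v) = tau (piy v) := by simp [T]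

lemma sig_add (x x' : Vec a) : sig (x + x') = sig x + sig x' := by
  funext i; simp only [sig, Pi.add_apply]; split_ifs <;> ring

lemma tau_add (y y' : Vec k) : tau (y + y') = tau y + tau y' := by
  funext j; simp only [tau, Pi.add_apply]; split_ifs <;> first | rfl | simp | ring

@[simp] lemma sig_zero : sig (0 : Vec a) = 0 := by
  funext i; simp only [sig, Pi.zero_apply]; split_ifs <;> simp

@[simp] lemma tau_zero : tau (0 : Vec k) = 0 := by
  funext j; simp only [tau, Pi.zero_apply]; split_ifs <;> simp

lemma T_add (v w : Vec (a + k)) : T (v + w) = T v + T w := by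
  apply ext_parts <;> simp [sig_add, tau_add]






lemma tau_even (hk : k % 2 = 0) (y : Vec k) (j : Fin k) (h : j.val % 2 = 0) :
    tau y j = y ⟨j.val + 1, by have := j.isLt; omega⟩ := by
  have h1 : j.val + 1 < k := by have := j.isLt; omega
  simp only [tau, if_pos h, dif_pos h1]

lemma tau_odd (y : Vec k) (j : Fin k) (h : j.val % 2 = 1) :
    tau y j = y ⟨j.val - 1, by have := j.isLt; omega⟩ + y j := by
  simp only [tau]
  rw [if_neg (by omega)]

lemma tau_tau (hk : k % 2 = 0) (y : Vec k) : tau (tau y) = y + tau y := by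
  funext j
  rcases Nat.even_or_odd j.val with he | ho
  · have h : j.val % 2 = 0 := Nat.even_iff.mp he
    have hj1 : j.val + 1 < k := by have := j.isLt; omega
    rw [Pi.add_apply, tau_even hk (tau y) j h, tau_even hk y j h,
      tau_odd y ⟨j.val + 1, hj1⟩ (show (j.val + 1) % 2 = 1 by omega)]
    have e1 : (⟨j.val + 1 - 1, by omega⟩ : Fin k) = j := by ext; simp
    rw [e1]
  · have h : j.val % 2 = 1 := Nat.odd_iff.mp ho
    have hj : j.val - 1 < k := by have := j.isLt; omega
    have hjo : 1 ≤ j.val := by omega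
    rw [Pi.add_apply, tau_odd (tau y) j h, tau_odd y j h,
      tau_even hk y ⟨j.val - 1, hj⟩ (show (j.val - 1) % 2 = 0 by omega)]
    simp only [Fin.val_mk]
    have e1 : (⟨j.val - 1 + 1, by omega⟩ : Fin k) = j := by ext; simp; omega
    rw [e1]



lemma tau_tau_tau (hk : k % 2 = 0) (y : Vec k) : tau (tau (tau y)) = y := by
  rw [tau_tau hk (tau y), tau_tau hk y]
  funext j
  simp only [Pi.add_apply]
  generalize y j = b
  generalize tau y j = c
  rw [show c + (b + c) = b + (c + c) by ring, zmod2_add_self, add_zero]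

lemma tau_inj (hk : k % 2 = 0) : Function.Injective (tau : Vec k → Vec k) := by
  intro y y' h
  have h2 : tau (tau (tau y)) = tau (tau (tau y')) := by rw [h]
  rwa [tau_tau_tau hk, tau_tau_tau hk] at h2

lemma tau_ne_zero (hk : k % 2 = 0) {y : Vec k} (hy : y ≠ 0) : tau y ≠ 0 := by
  intro h
  apply hy
  rw [← tau_tau_tau hk y, h, tau_zero, tau_zero]

lemma tau_ne_self (hk : k % 2 = 0) {y : Vec k} (hy : y ≠ 0) : tau y ≠ y := by
  intro h
  apply hy
  have h2 := tau_tau hk y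
  rw [h, h] at h2
  -- h2 : y = y + y
  funext j
  have := congrFun h2 j
  simp only [Pi.add_apply] at this
  rw [show y j + y j = 0 from zmod2_add_self _] at this
  simpa using this

lemma tau_tau_ne_self (hk : k % 2 = 0) {y : Vec k} (hy : y ≠ 0) : tau (tau y) ≠ y := by
  intro h
  have h2 := tau_tau hk y
  rw [h] at h2
  -- y = y + tau y
  have : tau y = 0 := by
    funext j
    have := congrFun h2 j
    simp only [Pi.add_apply] at this
    have h3 : y j + 0 = y j + tau y j := by rw [add_zero]; exact this
    exact (add_left_cancel h3).symm
  exact tau_ne_zero hk hy this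

lemma tau_tau_ne_tau (hk : k % 2 = 0) {y : Vec k} (hy : y ≠ 0) : tau (tau y) ≠ tau y := by
  exact tau_ne_self hk (tau_ne_zero hk hy)

lemma add_tau_eq_zero (hk : k % 2 = 0) {y : Vec k} (h : y + tau y = 0) : y = 0 := by
  have h2 : tau (tau y) = 0 := by rw [tau_tau hk]; exact h
  by_contra hy
  exact tau_ne_zero hk (tau_ne_zero hk hy) h2






lemma sig_apply_zero (ha : 0 < a) (x : Vec a) :
    sig x ⟨0, ha⟩ = x ⟨a - 1, by omega⟩ := by simp [sig]

lemma sig_apply_one (ha : 1 < a) (x : Vec a) :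
    sig x ⟨1, ha⟩ = x ⟨0, by omega⟩ + x ⟨a - 1, by omega⟩ := by simp [sig]

lemma sig_apply_ge (x : Vec a) (n : ℕ) (h2 : 2 ≤ n) (hn : n < a) :
    sig x ⟨n, hn⟩ = x ⟨n - 1, by omega⟩ := by
  simp only [sig]
  rw [if_neg (by omega), if_neg (by omega)]

lemma sig_eq_zero (ha : 2 < a) {x : Vec a} (h : sig x = 0) : x = 0 := by
  have h0 : x ⟨a - 1, by omega⟩ = 0 := by
    have := congrFun h ⟨0, by omega⟩
    rwa [sig_apply_zero (by omega)] at this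
  have h1 : x ⟨0, by omega⟩ = 0 := by
    have := congrFun h ⟨1, by omega⟩
    rw [sig_apply_one (by omega)] at this
    rw [show (⟨a-1, by omega⟩ : Fin a) = ⟨a-1, by omega⟩ from rfl] at h0
    simp only [Pi.zero_apply] at this
    calc x ⟨0, by omega⟩ = x ⟨0, by omega⟩ + x ⟨a-1, by omega⟩ + x ⟨a-1, by omega⟩ := by
          rw [add_assoc, zmod2_add_self, add_zero]
      _ = 0 := by rw [this, h0, zero_add]
  funext i
  rcases Nat.lt_or_ge i.val 1 with hi | hi
  · have : i = ⟨0, by omega⟩ := by ext; simp; omega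
    rw [this]; exact h1
  · rcases Nat.lt_or_ge i.val (a - 1) with hi2 | hi2
    · have := congrFun h ⟨i.val + 1, by omega⟩
      rw [sig_apply_ge x (i.val + 1) (by omega) (by omega)] at this
      simp only [Pi.zero_apply] at this
      have e : (⟨i.val + 1 - 1, by omega⟩ : Fin a) = i := by ext; simp
      rwa [e] at this
    · have : i = (⟨a - 1, by omega⟩ : Fin a) := by ext; have := i.isLt; simp; omega
      rw [this]; exact h0



lemma add_sig_eq_zero (ha : 2 < a) {x : Vec a} (h : x + sig x = 0) : x = 0 := by
  have hx : ∀ i, x i = sig x i := by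
    intro i
    exact zmod2_eq_of_add_eq_zero (congrFun h i)
  -- x_0 = x_{a-1}
  have h0 : x ⟨0, by omega⟩ = x ⟨a - 1, by omega⟩ := by
    have := hx ⟨0, by omega⟩
    rwa [sig_apply_zero (by omega)] at this
  -- chain: for n ≥ 1, x_{n} = 0
  have key : ∀ n, ∀ hn : n + 1 < a, x ⟨n + 1, hn⟩ = 0 := by
    intro n
    induction n with
    | zero =>
      intro hn
      have := hx ⟨1, hn⟩
      rw [sig_apply_one (by omega)] at this
      rw [h0] at this
      -- x_1 = x_{a-1} + x_{a-1} = 0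
      rw [this, zmod2_add_self]
    | succ m ih =>
      intro hn
      have := hx ⟨m + 2, hn⟩
      rw [sig_apply_ge x (m + 2) (by omega) (by omega)] at this
      have e : (⟨m + 2 - 1, by omega⟩ : Fin a) = ⟨m + 1, by omega⟩ := by ext; simp
      rw [e] at this
      rw [this, ih (by omega)]
  have hlast : x ⟨a - 1, by omega⟩ = 0 := by
    have := key (a - 2) (by omega)
    have e : (⟨a - 2 + 1, by omega⟩ : Fin a) = ⟨a - 1, by omega⟩ := by ext; simp; omega
    rwa [e] at this
  funext i
  simp only [Pi.zero_apply]
  rcases Nat.lt_or_ge i.val 1 with hi | hi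
  · have : i = ⟨0, by omega⟩ := by ext; simp; omega
    rw [this, h0]; exact hlast
  · have : i = (⟨i.val - 1 + 1, by have := i.isLt; omega⟩ : Fin a) := by ext; simp; omega
    rw [this]; exact key (i.val - 1) (by have := i.isLt; omega)



lemma vec_eq_of_add_eq_zero {n : ℕ} {v w : Vec n} (h : v + w = 0) : v = w := by
  funext i
  exact zmod2_eq_of_add_eq_zero (congrFun h i)

lemma vec_add_self {n : ℕ} (v : Vec n) : v + v = 0 := by
  funext i; exact zmod2_add_self _

lemma T_eq_zero (ha : 2 < a) (hk : k % 2 = 0) {v : Vec (a + k)} (h : T v = 0) : v = 0 := by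
  have hc : sig (chi v) = 0 := by rw [← chi_T, h, chi_zero]
  have hp : tau (piy v) = 0 := by rw [← piy_T, h, piy_zero]
  have hc2 : chi v = 0 := sig_eq_zero ha hc
  have hp2 : piy v = 0 := by
    by_contra hne
    exact tau_ne_zero hk hne hp
  apply ext_parts <;> simp [hc2, hp2]

lemma T_inj (ha : 2 < a) (hk : k % 2 = 0) : Function.Injective (T : Vec (a+k) → Vec (a+k)) := by
  intro v w h
  have h2 : T (v + w) = 0 := by rw [T_add, h, vec_add_self]
  exact vec_eq_of_add_eq_zero (T_eq_zero ha hk h2)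

lemma addT_inj (ha : 2 < a) (hk : k % 2 = 0) :
    Function.Injective (fun v : Vec (a+k) => v + T v) := by
  intro v w h
  simp only at h
  have h2 : (v + w) + T (v + w) = 0 := by
    rw [T_add]
    have : v + w + (T v + T w) = (v + T v) + (w + T w) := by ring
    rw [this, h, vec_add_self]
  have hc : chi (v + w) = 0 := by
    apply add_sig_eq_zero ha
    have := congrArg chi h2
    simpa [sig_add] using this
  have hp : piy (v + w) = 0 := by
    apply add_tau_eq_zero hk
    have := congrArg piy h2
    simpa [tau_add] using this
  have : v + w = 0 := by apply ext_parts <;> simp [hc, hp]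
  exact vec_eq_of_add_eq_zero this

lemma T_bij (ha : 2 < a) (hk : k % 2 = 0) : Function.Bijective (T : Vec (a+k) → Vec (a+k)) :=
  (Finite.injective_iff_bijective).mp (T_inj ha hk)

lemma addT_bij (ha : 2 < a) (hk : k % 2 = 0) :
    Function.Bijective (fun v : Vec (a+k) => v + T v) :=
  (Finite.injective_iff_bijective).mp (addT_inj ha hk)

noncomputable def cN {k : ℕ} (y : Vec k) : ℕ := (Fintype.equivFin (Vec k) y).val

lemma cN_inj {k : ℕ} : Function.Injective (cN : Vec k → ℕ) :=
  Fin.val_injective.comp (Fintype.equivFin (Vec k)).injective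

def isRep {k : ℕ} (y : Vec k) : Prop :=
  y ≠ 0 ∧ cN y ≤ cN (tau y) ∧ cN y ≤ cN (tau (tau y))

/-- exactly one of `y, τy, τ²y` is a representative. -/
lemma rep_trichotomy (hk : k % 2 = 0) {y : Vec k} (hy : y ≠ 0) :
    (isRep y ∧ ¬isRep (tau y) ∧ ¬isRep (tau (tau y))) ∨
    (¬isRep y ∧ isRep (tau y) ∧ ¬isRep (tau (tau y))) ∨
    (¬isRep y ∧ ¬isRep (tau y) ∧ isRep (tau (tau y))) := by
  have hy1 : tau y ≠ 0 := tau_ne_zero hk hy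
  have hy2 : tau (tau y) ≠ 0 := tau_ne_zero hk hy1
  have h3 : tau (tau (tau y)) = y := tau_tau_tau hk y
  have h4 : tau (tau (tau (tau y))) = tau y := by rw [h3]
  have d12 : cN y ≠ cN (tau y) := fun h => tau_ne_self hk hy (cN_inj h).symm
  have d13 : cN y ≠ cN (tau (tau y)) := fun h => tau_tau_ne_self hk hy (cN_inj h).symm
  have d23 : cN (tau y) ≠ cN (tau (tau y)) := fun h => tau_tau_ne_tau hk hy (cN_inj h).symm
  simp only [isRep, hy, hy1, hy2, h3, h4, ne_eq, not_false_eq_true, true_and]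
  omega

open scoped Classical in
noncomputable def Dset (a k : ℕ) : Finset (Vec (a + k)) :=
  Finset.univ.filter (fun v => isRep (piy v))

/-- the line attached to a vector -/
def Lline (v : Vec (a + k)) : Submodule (ZMod 2) (Vec (a + k)) :=
  Submodule.span (ZMod 2) {v, T v}

lemma mem_Lline_iff {v p : Vec (a + k)} :
    p ∈ Lline v ↔ p = 0 ∨ p = v ∨ p = T v ∨ p = v + T v := by
  rw [Lline, Submodule.mem_span_pair]
  constructor
  · rintro ⟨s, t, rfl⟩
    have hst : ∀ c : ZMod 2, c = 0 ∨ c = 1 := by decide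
    rcases hst s with rfl | rfl <;> rcases hst t with rfl | rfl <;>
      simp [zero_smul, one_smul]
  · rintro (rfl | rfl | rfl | rfl)
    · exact ⟨0, 0, by simp⟩
    · exact ⟨1, 0, by simp⟩
    · exact ⟨0, 1, by simp⟩
    · exact ⟨1, 1, by simp⟩

@[simp] lemma chi_smul (c : ZMod 2) (v : Vec (a + k)) : chi (c • v) = c • chi v := rfl
@[simp] lemma piy_smul (c : ZMod 2) (v : Vec (a + k)) : piy (c • v) = c • piy v := rfl

lemma piy_ne_zero_imp {v : Vec (a + k)} (h : piy v ≠ 0) : v ≠ 0 := by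
  intro hv; rw [hv] at h; exact h piy_zero

lemma piy_addT (hk : k % 2 = 0) (v : Vec (a + k)) :
    piy (v + T v) = tau (tau (piy v)) := by
  rw [piy_add, piy_T, tau_tau hk]

lemma lin_indep_pair (hk : k % 2 = 0) {v : Vec (a + k)} (hv : piy v ≠ 0) :
    LinearIndependent (ZMod 2) ![v, T v] := by
  rw [LinearIndependent.pair_iff]
  have h1 : v ≠ 0 := piy_ne_zero_imp hv
  have h2 : T v ≠ 0 := piy_ne_zero_imp (by rw [piy_T]; exact tau_ne_zero hk hv)
  have h3 : v + T v ≠ 0 := piy_ne_zero_imp (by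
    rw [piy_addT hk]; exact tau_ne_zero hk (tau_ne_zero hk hv))
  intro s t hst
  have hc : ∀ c : ZMod 2, c = 0 ∨ c = 1 := by decide
  rcases hc s with rfl | rfl <;> rcases hc t with rfl | rfl <;>
    simp_all [zero_smul, one_smul]

lemma isLine_Lline (hk : k % 2 = 0) {v : Vec (a + k)} (hv : piy v ≠ 0) :
    Module.finrank (ZMod 2) (Lline v) = 2 := by
  have hr : ({v, T v} : Set (Vec (a + k))) = Set.range ![v, T v] := by
    ext x; simp [Matrix.range_cons, Matrix.range_empty]; tauto
  rw [Lline, hr, finrank_span_eq_card (lin_indep_pair hk hv), Fintype.card_fin]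

def Asub (a k : ℕ) : Submodule (ZMod 2) (Vec (a + k)) where
  carrier := {v | piy v = 0}
  add_mem' := by
    intro v w hv hw
    simp only [Set.mem_setOf_eq] at *
    rw [piy_add, hv, hw, add_zero]
  zero_mem' := by simp only [Set.mem_setOf_eq, piy_zero]
  smul_mem' := by
    intro c v hv
    simp only [Set.mem_setOf_eq] at *
    rw [piy_smul, hv, smul_zero]

lemma mem_Asub {v : Vec (a + k)} : v ∈ Asub a k ↔ piy v = 0 := Iff.rfl

noncomputable def eA (a k : ℕ) : Vec a ≃ₗ[ZMod 2] Asub a k where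
  toFun x := ⟨glue x 0, by rw [mem_Asub, piy_glue]⟩
  map_add' x x' := by
    apply Subtype.ext
    apply ext_parts <;> simp
  map_smul' c x := by
    apply Subtype.ext
    apply ext_parts <;> simp
  invFun w := chi w.val
  left_inv x := by simp
  right_inv w := by
    apply Subtype.ext
    apply ext_parts <;> simp
    exact (mem_Asub.mp w.2).symm

lemma finrank_Asub : Module.finrank (ZMod 2) (Asub a k) = a := by
  rw [← LinearEquiv.finrank_eq (eA a k), Module.finrank_pi, Fintype.card_fin]

lemma card_vec (n : ℕ) : Fintype.card (Vec n) = 2 ^ n := by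
  rw [Fintype.card_fun, ZMod.card, Fintype.card_fin]

lemma isRep_ne_zero {y : Vec k} (h : isRep y) : y ≠ 0 := h.1

lemma piy_ne_of_rep_tau (hk : k % 2 = 0) {v : Vec (a + k)} (h : isRep (tau (piy v))) :
    piy v ≠ 0 := by
  intro h0; rw [h0, tau_zero] at h; exact h.1 rfl

lemma piy_ne_of_rep_tautau (hk : k % 2 = 0) {v : Vec (a + k)}
    (h : isRep (tau (tau (piy v)))) : piy v ≠ 0 := by
  intro h0; rw [h0, tau_zero, tau_zero] at h; exact h.1 rfl

open scoped Classical in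
lemma card_Dset (ha : 2 < a) (hk : k % 2 = 0) :
    3 * (Dset a k).card = 2 ^ (a + k) - 2 ^ a := by
  classical
  set D := Dset a k with hD
  set D1 := Finset.univ.filter (fun v : Vec (a + k) => isRep (tau (piy v))) with hD1def
  set D2 := Finset.univ.filter (fun v : Vec (a + k) => isRep (tau (tau (piy v)))) with hD2def
  have hcard1 : D1.card = D.card := by
    apply Finset.card_bij (i := fun v _ => T v)
    · intro v hv
      rw [hD1def, Finset.mem_filter] at hv
      rw [hD, Dset, Finset.mem_filter]
      exact ⟨Finset.mem_univ _, by rw [piy_T]; exact hv.2⟩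
    · intro v1 h1 v2 h2 h
      exact T_inj ha hk h
    · intro w hw
      obtain ⟨v, rfl⟩ := (T_bij ha hk).surjective w
      refine ⟨v, ?_, rfl⟩
      rw [hD, Dset, Finset.mem_filter] at hw
      rw [hD1def, Finset.mem_filter]
      exact ⟨Finset.mem_univ _, by rw [← piy_T]; exact hw.2⟩
  have hcard2 : D2.card = D.card := by
    apply Finset.card_bij (i := fun v _ => T (T v))
    · intro v hv
      rw [hD2def, Finset.mem_filter] at hv
      rw [hD, Dset, Finset.mem_filter]
      refine ⟨Finset.mem_univ _, ?_⟩
      rw [piy_T, piy_T]; exact hv.2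
    · intro v1 h1 v2 h2 h
      exact T_inj ha hk (T_inj ha hk h)
    · intro w hw
      obtain ⟨u, rfl⟩ := (T_bij ha hk).surjective w
      obtain ⟨v, rfl⟩ := (T_bij ha hk).surjective u
      refine ⟨v, ?_, rfl⟩
      rw [hD, Dset, Finset.mem_filter] at hw
      rw [hD2def, Finset.mem_filter]
      refine ⟨Finset.mem_univ _, ?_⟩
      rw [← piy_T, ← piy_T]; exact hw.2
  have hsplit : (Finset.univ.filter (fun v : Vec (a + k) => piy v ≠ 0)).card
      = D.card + D1.card + D2.card := by
    have he : Finset.univ.filter (fun v : Vec (a + k) => piy v ≠ 0)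
        = (D ∪ D1) ∪ D2 := by
      rw [hD, Dset, hD1def, hD2def, ← Finset.filter_or, ← Finset.filter_or]
      apply Finset.filter_congr
      intro v _
      constructor
      · intro hv
        rcases rep_trichotomy hk hv with ⟨h1, _, _⟩ | ⟨_, h2, _⟩ | ⟨_, _, h3⟩
        · exact Or.inl (Or.inl h1)
        · exact Or.inl (Or.inr h2)
        · exact Or.inr h3
      · rintro ((h | h) | h)
        · exact h.1
        · exact piy_ne_of_rep_tau hk h
        · exact piy_ne_of_rep_tautau hk h
    rw [he]
    rw [Finset.card_union_of_disjoint, Finset.card_union_of_disjoint]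
    · rw [Finset.disjoint_left]
      intro v hv1 hv2
      rw [hD, Dset, Finset.mem_filter] at hv1
      rw [hD1def, Finset.mem_filter] at hv2
      rcases rep_trichotomy hk hv1.2.1 with ⟨_, h2, _⟩ | ⟨h1, _, _⟩ | ⟨h1, _, _⟩
      · exact h2 hv2.2
      · exact h1 hv1.2
      · exact h1 hv1.2
    · rw [Finset.disjoint_left]
      intro v hv1 hv2
      rw [Finset.mem_union] at hv1
      rw [hD2def, Finset.mem_filter] at hv2
      have hpv : piy v ≠ 0 := piy_ne_of_rep_tautau hk hv2.2
      rcases rep_trichotomy hk hpv with ⟨_, _, h3⟩ | ⟨_, _, h3⟩ | ⟨h1, h2, _⟩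
      · exact h3 hv2.2
      · exact h3 hv2.2
      · rcases hv1 with h | h
        · rw [hD, Dset, Finset.mem_filter] at h; exact h1 h.2
        · rw [hD1def, Finset.mem_filter] at h; exact h2 h.2
  have hZ : (Finset.univ.filter (fun v : Vec (a + k) => piy v = 0)).card = 2 ^ a := by
    have : (Finset.univ.filter (fun v : Vec (a + k) => piy v = 0)).card
        = (Finset.univ : Finset (Vec a)).card := by
      symm
      apply Finset.card_bij (i := fun x _ => glue x (0 : Vec k))
      · intro x _
        rw [Finset.mem_filter]
        exact ⟨Finset.mem_univ _, by rw [piy_glue]⟩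
      · intro x1 _ x2 _ h
        have := congrArg chi h
        rwa [chi_glue, chi_glue] at this
      · intro v hv
        rw [Finset.mem_filter] at hv
        refine ⟨chi v, Finset.mem_univ _, ?_⟩
        apply ext_parts <;> simp [hv.2]
    rw [this, Finset.card_univ, card_vec]
  have htot : (Finset.univ.filter (fun v : Vec (a + k) => piy v = 0)).card
      + (Finset.univ.filter (fun v : Vec (a + k) => ¬ (piy v = 0))).card
      = 2 ^ (a + k) := by
    rw [Finset.card_filter_add_card_filter_not, Finset.card_univ, card_vec]
  have hN : (Finset.univ.filter (fun v : Vec (a + k) => piy v ≠ 0)).card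
      = 2 ^ (a + k) - 2 ^ a := by
    have := htot
    rw [hZ] at this
    simp only [ne_eq]
    omega
  rw [hN] at hsplit
  omega

open scoped Classical in
lemma mem_Dset {v : Vec (a + k)} : v ∈ Dset a k ↔ isRep (piy v) := by
  rw [Dset, Finset.mem_filter]
  simp only [Finset.mem_univ, true_and]

lemma cover_unique (ha : 2 < a) (hk : k % 2 = 0) {p : Vec (a + k)} (hp : p ≠ 0)
    (hpy : piy p ≠ 0) : ∃! v, v ∈ Dset a k ∧ p ∈ Lline v := by
  rcases rep_trichotomy hk hpy with ⟨h1, h2, h3⟩ | ⟨h1, h2, h3⟩ | ⟨h1, h2, h3⟩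
  · -- representative is piy p itself; v₀ = p
    refine ⟨p, ⟨mem_Dset.mpr h1, mem_Lline_iff.mpr (Or.inr (Or.inl rfl))⟩, ?_⟩
    rintro v ⟨hvD, hvL⟩
    rcases mem_Lline_iff.mp hvL with h | h | h | h
    · exact absurd h hp
    · exact h.symm
    · exfalso
      have e1 : piy p = tau (piy v) := by rw [h, piy_T]
      have e2 : piy v = tau (tau (piy p)) := by
        rw [e1, tau_tau_tau hk]
      exact h3 (e2 ▸ mem_Dset.mp hvD)
    · exfalso
      have e1 : piy p = tau (tau (piy v)) := by rw [h, piy_addT hk]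
      have e2 : piy v = tau (piy p) := by
        rw [e1, tau_tau_tau hk]
      exact h2 (e2 ▸ mem_Dset.mp hvD)
  · -- v₀ = (1+T)⁻¹ p
    obtain ⟨v₀, hv₀⟩ := (addT_bij ha hk).surjective p
    simp only at hv₀
    have e0 : piy v₀ = tau (piy p) := by
      rw [← hv₀, piy_addT hk, tau_tau_tau hk]
    refine ⟨v₀, ⟨mem_Dset.mpr (by rw [e0]; exact h2),
      mem_Lline_iff.mpr (Or.inr (Or.inr (Or.inr hv₀.symm)))⟩, ?_⟩
    rintro v ⟨hvD, hvL⟩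
    rcases mem_Lline_iff.mp hvL with h | h | h | h
    · exact absurd h hp
    · exfalso; exact h1 (h ▸ mem_Dset.mp hvD)
    · exfalso
      have e1 : piy p = tau (piy v) := by rw [h, piy_T]
      have e2 : piy v = tau (tau (piy p)) := by rw [e1, tau_tau_tau hk]
      exact h3 (e2 ▸ mem_Dset.mp hvD)
    · exact addT_inj ha hk (show v + T v = v₀ + T v₀ by rw [← h, hv₀])
  · -- v₀ = T⁻¹ p
    obtain ⟨v₀, hv₀⟩ := (T_bij ha hk).surjective p
    have e0 : piy v₀ = tau (tau (piy p)) := by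
      rw [← hv₀, piy_T, tau_tau_tau hk]
    refine ⟨v₀, ⟨mem_Dset.mpr (by rw [e0]; exact h3),
      mem_Lline_iff.mpr (Or.inr (Or.inr (Or.inl hv₀.symm)))⟩, ?_⟩
    rintro v ⟨hvD, hvL⟩
    rcases mem_Lline_iff.mp hvL with h | h | h | h
    · exact absurd h hp
    · exfalso; exact h1 (h ▸ mem_Dset.mp hvD)
    · exact T_inj ha hk (show T v = T v₀ by rw [← h, hv₀])
    · exfalso
      have e1 : piy p = tau (tau (piy v)) := by rw [h, piy_addT hk]
      have e2 : piy v = tau (piy p) := by rw [e1, tau_tau_tau hk]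
      exact h2 (e2 ▸ mem_Dset.mp hvD)

lemma cover_none (hk : k % 2 = 0) {p : Vec (a + k)} (hp : p ≠ 0)
    (hpy : piy p = 0) : ∀ v ∈ Dset a k, p ∉ Lline v := by
  intro v hvD hvL
  have hrep : isRep (piy v) := mem_Dset.mp hvD
  have hy : piy v ≠ 0 := hrep.1
  rcases mem_Lline_iff.mp hvL with h | h | h | h
  · exact hp h
  · rw [h] at hpy; exact hy hpy
  · rw [h, piy_T] at hpy; exact tau_ne_zero hk hy hpy
  · rw [h, piy_addT hk] at hpy
    exact tau_ne_zero hk (tau_ne_zero hk hy) hpy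

end VSP

/-- For `r > a > 2` with `r ≡ a (mod 2)` there is a vector space partition of `PG(r-1,2)`
of type `2^{t_2} a^1` with `t_2 = 2^a·(2^{r-a} - 1)/3`. -/
theorem vsp_type_lines_a (r a : ℕ) (ha : 2 < a) (har : a < r) (hmod : r % 2 = a % 2) :
    ∃ (Ls : Multiset (Submodule (ZMod 2) (Vec r))) (A : Submodule (ZMod 2) (Vec r)),
      3 * Multiset.card Ls = 2 ^ a * (2 ^ (r - a) - 1) ∧ (∀ L ∈ Ls, isLine L) ∧
      Module.finrank (ZMod 2) A = a ∧
      ∀ P, isPoint P → coverCount (A ::ₘ Ls) P = 1 := by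
  obtain ⟨k, rfl⟩ : ∃ k, r = a + k := ⟨r - a, by omega⟩
  have hk : k % 2 = 0 := by omega
  classical
  refine ⟨(VSP.Dset a k).val.map VSP.Lline, VSP.Asub a k, ?_, ?_, VSP.finrank_Asub, ?_⟩
  · -- cardinality
    rw [Multiset.card_map]
    have hcard := VSP.card_Dset ha hk
    have hval : Multiset.card (VSP.Dset a k).val = (VSP.Dset a k).card := rfl
    rw [hval, Nat.add_sub_cancel_left]
    obtain ⟨n, hn⟩ : ∃ n, 2 ^ k = n + 1 :=
      ⟨2 ^ k - 1, by have := Nat.one_le_two_pow (n := k); omega⟩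
    rw [pow_add, hn, Nat.mul_add, mul_one, Nat.add_sub_cancel] at hcard
    rw [hn, Nat.add_sub_cancel, hcard]
  · -- all lines
    intro L hL
    rw [Multiset.mem_map] at hL
    obtain ⟨v, hv, rfl⟩ := hL
    have hrep := VSP.mem_Dset.mp hv
    exact VSP.isLine_Lline hk hrep.1
  · -- cover count
    intro P hP
    have hP' : Module.finrank (ZMod 2) P = 1 := hP
    have hPbot : P ≠ ⊥ := by
      intro h
      rw [h, finrank_bot] at hP'
      exact zero_ne_one hP'
    obtain ⟨p, hpP, hp0⟩ := (Submodule.ne_bot_iff P).mp hPbot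
    have hPs : P = Submodule.span (ZMod 2) {p} := by
      symm
      apply Submodule.eq_of_le_of_finrank_eq
      · exact (Submodule.span_singleton_le_iff_mem p P).mpr hpP
      · rw [finrank_span_singleton hp0, hP']
    have hle : ∀ W : Submodule (ZMod 2) (Vec (a + k)), P ≤ W ↔ p ∈ W := by
      intro W
      rw [hPs]
      exact Submodule.span_singleton_le_iff_mem p W
    rw [coverCount, Multiset.filter_cons, Multiset.card_add, Multiset.filter_map,
      Multiset.card_map]
    by_cases hpy : VSP.piy p = 0
    · rw [if_pos ((hle _).mpr (VSP.mem_Asub.mpr hpy))]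
      have hnil : Multiset.filter ((fun W => P ≤ W) ∘ VSP.Lline) (VSP.Dset a k).val = 0 := by
        rw [Multiset.filter_eq_nil]
        intro v hv
        simp only [Function.comp_apply]
        rw [hle]
        exact VSP.cover_none hk hp0 hpy v hv
      rw [hnil]
      simp
    · rw [if_neg (fun hcon => hpy (VSP.mem_Asub.mp ((hle _).mp hcon)))]
      obtain ⟨v₀, hv₀, huniq⟩ := VSP.cover_unique ha hk hp0 hpy
      have hfe : Multiset.filter ((fun W => P ≤ W) ∘ VSP.Lline) (VSP.Dset a k).val
          = ((VSP.Dset a k).filter (fun v => p ∈ VSP.Lline v)).val := by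
        rw [Finset.filter_val]
        apply Multiset.filter_congr
        intro v _
        simp only [Function.comp_apply]
        rw [hle]
      have hsing : (VSP.Dset a k).filter (fun v => p ∈ VSP.Lline v) = {v₀} := by
        apply Finset.eq_singleton_iff_unique_mem.mpr
        constructor
        · rw [Finset.mem_filter]
          exact hv₀
        · intro x hx
          rw [Finset.mem_filter] at hx
          exact huniq x hx
      rw [hfe, hsing]
      simp
end

section
/- Let r > a > 2 with r ≡ a (mod 2), let V be a vector space partition of PG(r-1,2) of type 2^{t_2} a^1 with t_2 = 2^a·(2^{r-a}−1)/3, let S be its set of lines and A its unique a-dimensional member. Then every hyperplane H of PG(r-1,2) contains exactly s = 2^{a-2}·(2^{r-a}−1)/3 lines of S if A is not contained in H, and exactly s − 2^{a-2} lines of S if A is contained in H. -/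
open scoped Classical

section Aux

/-- card of filter as a sum of indicator values. -/
lemma aux_card_filter_eq_sum {α : Type*} (M : Multiset α) (p : α → Prop) [DecidablePred p] :
    Multiset.card (M.filter p) = (M.map fun x => if p x then 1 else 0).sum := by
  induction M using Multiset.induction_on with
  | empty => simp
  | cons b M ih => by_cases h : p b <;> simp [h, ih, Nat.add_comm]

/-- swap a Finset sum and a Multiset-map sum. -/
lemma aux_swap {α β : Type*} (s : Finset α) (M : Multiset β) (f : α → β → ℕ) :
    ∑ v ∈ s, (M.map (f v)).sum = (M.map (fun W => ∑ v ∈ s, f v W)).sum := by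
  induction M using Multiset.induction_on with
  | empty => simp
  | cons b M ih => simp [Finset.sum_add_distrib, ih]

lemma aux_sum_ite {α : Type*} (M : Multiset α) (p : α → Prop) [DecidablePred p] :
    (M.map fun x => if p x then 3 else 1).sum
      = 2 * Multiset.card (M.filter p) + Multiset.card M := by
  induction M using Multiset.induction_on with
  | empty => simp
  | cons b M ih => by_cases h : p b <;> simp [h, ih] <;> ring

/-- number of nonzero vectors in a subspace. -/
lemma aux_nnz {r : ℕ} (U : Submodule (ZMod 2) (Vec r)) :
    (Finset.univ.filter (fun v => v ∈ U ∧ v ≠ 0)).card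
      = 2 ^ (Module.finrank (ZMod 2) U) - 1 := by
  have h0 : (Finset.univ.filter (fun v : Vec r => v ∈ U)).card
      = 2 ^ Module.finrank (ZMod 2) U := by
    rw [← Fintype.card_subtype]
    have := Module.card_eq_pow_finrank (K := ZMod 2) (V := U)
    simpa using this
  have he : Finset.univ.filter (fun v : Vec r => v ∈ U ∧ v ≠ 0)
      = (Finset.univ.filter (fun v => v ∈ U)).erase 0 := by
    ext v; simp [Finset.mem_erase, and_comm]
  rw [he, Finset.card_erase_of_mem (by simp [U.zero_mem]), h0]

lemma aux_finrank_inf {r : ℕ} (W H : Submodule (ZMod 2) (Vec r)) (d : ℕ) (hd : 1 ≤ d)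
    (hW : Module.finrank (ZMod 2) W = d) (hH : Module.finrank (ZMod 2) H = r - 1)
    (hr : 1 ≤ r) :
    (W ≤ H → Module.finrank (ZMod 2) (W ⊓ H : Submodule (ZMod 2) (Vec r)) = d) ∧
    (¬ W ≤ H → Module.finrank (ZMod 2) (W ⊓ H : Submodule (ZMod 2) (Vec r)) = d - 1) := by
  constructor
  · intro h
    rw [inf_eq_left.mpr h, hW]
  · intro h
    have hlt : W ⊓ H < W := by
      refine lt_of_le_of_ne inf_le_left ?_
      intro he
      exact h (by rw [← he]; exact inf_le_right)
    have hub : Module.finrank (ZMod 2) (W ⊓ H : Submodule (ZMod 2) (Vec r)) < d := by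
      rw [← hW]; exact Submodule.finrank_lt_finrank_of_lt hlt
    have hsum := Submodule.finrank_sup_add_finrank_inf_eq W H
    have hle : Module.finrank (ZMod 2) (W ⊔ H : Submodule (ZMod 2) (Vec r))
        ≤ Module.finrank (ZMod 2) (Vec r) := Submodule.finrank_le _
    have hdim : Module.finrank (ZMod 2) (Vec r) = r := by
      simp [Module.finrank_fin_fun]
    rw [hdim] at hle
    rw [hW, hH] at hsum
    omega

end Aux

/-- Hyperplane intersection numbers of the system of lines of a vector space partition of
type `2^{t_2} a^1`: a hyperplane `H` contains `s = 2^{a-2}·(2^{r-a}-1)/3` lines of the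
partition if `A ≰ H`, and `s - 2^{a-2}` lines if `A ≤ H`. -/
theorem vsp_hyperplane_counts (r a : ℕ) (ha : 2 < a) (har : a < r) (hmod : r % 2 = a % 2)
    (Ls : Multiset (Submodule (ZMod 2) (Vec r))) (A : Submodule (ZMod 2) (Vec r))
    (hcard : 3 * Multiset.card Ls = 2 ^ a * (2 ^ (r - a) - 1))
    (hlines : ∀ L ∈ Ls, isLine L) (hA : Module.finrank (ZMod 2) A = a)
    (hvsp : ∀ P, isPoint P → coverCount (A ::ₘ Ls) P = 1)
    (H : Submodule (ZMod 2) (Vec r)) (hH : isHyperplane H) :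
    (¬ A ≤ H → linesIn Ls H = 2 ^ (a - 2) * ((2 ^ (r - a) - 1) / 3)) ∧
    (A ≤ H → linesIn Ls H = 2 ^ (a - 2) * ((2 ^ (r - a) - 1) / 3) - 2 ^ (a - 2)) := by
  have hr : 1 ≤ r := by omega
  set M : Multiset (Submodule (ZMod 2) (Vec r)) := A ::ₘ Ls with hM
  -- the finset of nonzero vectors of H
  set Hnz : Finset (Vec r) := Finset.univ.filter (fun v => v ∈ H ∧ v ≠ 0) with hHnz
  -- Step 1: each nonzero vector of H is covered exactly once, so
  -- the total count of (v, W) incidences equals |Hnz|.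
  have step1 : ∑ v ∈ Hnz, (M.map fun W => if v ∈ W then 1 else 0).sum = Hnz.card := by
    rw [Finset.card_eq_sum_ones]
    refine Finset.sum_congr rfl (fun v hv => ?_)
    simp only [hHnz, Finset.mem_filter] at hv
    have hp : isPoint (Submodule.span (ZMod 2) {v}) := finrank_span_singleton hv.2.2
    have h1 := hvsp _ hp
    rw [coverCount] at h1
    have hfc : M.filter (fun W => Submodule.span (ZMod 2) {v} ≤ W)
        = M.filter (fun W => v ∈ W) :=
      Multiset.filter_congr (fun W _ => by simp [Submodule.span_singleton_le_iff_mem])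
    rw [hfc] at h1
    rw [← aux_card_filter_eq_sum, h1]
  -- Step 2: swap the sums
  have step2 : (M.map (fun W => ∑ v ∈ Hnz, if v ∈ W then 1 else 0)).sum = Hnz.card := by
    rw [← aux_swap]; exact step1
  -- Step 3: the inner sum is the number of nonzero vectors of W ⊓ H
  have step3 : ∀ W : Submodule (ZMod 2) (Vec r),
      (∑ v ∈ Hnz, if v ∈ W then 1 else 0)
        = 2 ^ (Module.finrank (ZMod 2) (W ⊓ H : Submodule (ZMod 2) (Vec r))) - 1 := by
    intro W
    rw [← Finset.card_filter]
    have hf : Hnz.filter (fun v => v ∈ W)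
        = Finset.univ.filter (fun v => v ∈ (W ⊓ H : Submodule (ZMod 2) (Vec r)) ∧ v ≠ 0) := by
      ext v
      simp only [hHnz, Finset.mem_filter, Finset.mem_univ, true_and, Submodule.mem_inf]
      tauto
    rw [hf, aux_nnz]
  -- Step 4: rewrite the map over M using step3 and split off A
  have hHnzcard : Hnz.card = 2 ^ (r - 1) - 1 := by
    have := aux_nnz (r := r) H
    rw [hH] at this
    exact this
  have step4 : (2 ^ (Module.finrank (ZMod 2) (A ⊓ H : Submodule (ZMod 2) (Vec r))) - 1)
      + (Ls.map (fun L =>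
          2 ^ (Module.finrank (ZMod 2) (L ⊓ H : Submodule (ZMod 2) (Vec r))) - 1)).sum
      = 2 ^ (r - 1) - 1 := by
    have := step2
    rw [Multiset.map_congr rfl (fun W _ => step3 W)] at this
    rw [hM, Multiset.map_cons, Multiset.sum_cons, hHnzcard] at this
    exact this
  -- Step 5: per-line values are 3 or 1
  have step5 : (Ls.map (fun L =>
      2 ^ (Module.finrank (ZMod 2) (L ⊓ H : Submodule (ZMod 2) (Vec r))) - 1)).sum
      = 2 * Multiset.card (Ls.filter (fun L => L ≤ H)) + Multiset.card Ls := by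
    have hmap : Ls.map (fun L =>
        2 ^ (Module.finrank (ZMod 2) (L ⊓ H : Submodule (ZMod 2) (Vec r))) - 1)
        = Ls.map (fun L => if L ≤ H then 3 else 1) := by
      refine Multiset.map_congr rfl (fun L hL => ?_)
      have hfr := aux_finrank_inf L H 2 (by omega) (hlines L hL) hH hr
      by_cases h : L ≤ H
      · rw [hfr.1 h]; simp [h]
      · rw [hfr.2 h]; simp [h]
    rw [hmap, aux_sum_ite]
  -- abbreviations for the arithmetic
  have hx : linesIn Ls H = Multiset.card (Ls.filter (fun L => L ≤ H)) := by
    rw [linesIn]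
  set x := Multiset.card (Ls.filter (fun L => L ≤ H)) with hxdef
  set t := Multiset.card Ls with htdef
  set m := (2 ^ (r - a) - 1) / 3 with hmdef
  set P := 2 ^ (a - 2) with hPdef
  -- divisibility: 3 ∣ 2^(r-a) - 1
  have hdvd : (3 : ℕ) ∣ 2 ^ (r - a) - 1 := by
    obtain ⟨k, hk⟩ : ∃ k, r - a = 2 * k := ⟨(r - a) / 2, by omega⟩
    have h4 : (2 : ℕ) ^ (r - a) = 4 ^ k := by
      rw [hk, pow_mul]; norm_num
    rw [h4]
    simpa using Nat.sub_dvd_pow_sub_pow 4 1 k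
  have h1le : (1 : ℕ) ≤ 2 ^ (r - a) := Nat.one_le_two_pow
  have hm3 : 3 * m = 2 ^ (r - a) - 1 := Nat.mul_div_cancel' hdvd
  have hq : (2 : ℕ) ^ (r - a) = 3 * m + 1 := by omega
  have h2a1 : (2 : ℕ) ^ (a - 1) = 2 * P := by
    rw [hPdef, ← pow_succ']
    congr 1
    omega
  have h2a : (2 : ℕ) ^ a = 4 * P := by
    have : a = (a - 2) + 2 := by omega
    rw [this, pow_add, hPdef]; ring
  have h2r1 : (2 : ℕ) ^ (r - 1) = 6 * (P * m) + 2 * P := by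
    have h : r - 1 = (a - 1) + (r - a) := by omega
    rw [h, pow_add, h2a1, hq]; ring
  have ht : 3 * t = 12 * (P * m) := by
    rw [htdef, hcard, h2a, ← hm3]; ring
  have hP1 : 1 ≤ P := Nat.one_le_two_pow
  constructor
  · intro hAH
    have hdA := (aux_finrank_inf A H a (by omega) hA hH hr).2 hAH
    rw [hdA, step5] at step4
    have h2am1 : (1:ℕ) ≤ 2 ^ (a-1) := Nat.one_le_two_pow
    rw [h2a1] at step4
    rw [hx]
    omega
  · intro hAH
    have hdA := (aux_finrank_inf A H a (by omega) hA hH hr).1 hAH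
    rw [hdA, step5, h2a] at step4
    rw [hx]
    omega
end

section
/- For r > a ≥ 2 with r ≡ a (mod 2) and any positive integer σ, the expression σ[r] − σ[a] is partitionable: there exists a multiset of lines in PG(r-1,2) whose covered point multiset equals σ·(χ_V − χ_A), where A is a fixed a-dimensional subspace, i.e. every point outside A is covered exactly σ times and every point of A exactly 0 times. -/
open scoped Classical in
/-- The number of lines of the multiset `S` passing through the (nonzero) vector `v`. -/
noncomputable def lineCountThrough {r : ℕ} (S : Multiset (Submodule (ZMod 2) (Vec r)))
    (v : Vec r) : ℕ :=
  Multiset.card (S.filter (fun L => v ∈ L))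



lemma zmod2_cases (z : ZMod 2) : z = 0 ∨ z = 1 := by revert z; decide

lemma mem_span_pair_zmod2 {M : Type*} [AddCommGroup M] [Module (ZMod 2) M] (p q v : M) :
    v ∈ Submodule.span (ZMod 2) {p, q} ↔ v = 0 ∨ v = p ∨ v = q ∨ v = p + q := by
  rw [Submodule.mem_span_pair]
  constructor
  · rintro ⟨s, t, rfl⟩
    rcases zmod2_cases s with hs | hs <;> rcases zmod2_cases t with ht | ht <;>
      subst hs <;> subst ht <;> simp
  · rintro (rfl | rfl | rfl | rfl)
    · exact ⟨0, 0, by simp⟩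
    · exact ⟨1, 0, by simp⟩
    · exact ⟨0, 1, by simp⟩
    · exact ⟨1, 1, by simp⟩

lemma finrank_span_pair_zmod2 {M : Type*} [AddCommGroup M] [Module (ZMod 2) M]
    {p q : M} (hp : p ≠ 0) (hq : q ≠ 0) (hpq : p + q ≠ 0) :
    Module.finrank (ZMod 2) (Submodule.span (ZMod 2) ({p, q} : Set M)) = 2 := by
  have hli : LinearIndependent (ZMod 2) ![p, q] := by
    rw [LinearIndependent.pair_iff]
    intro s t hst
    rcases zmod2_cases s with hs | hs <;> rcases zmod2_cases t with ht | ht <;>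
      subst hs <;> subst ht <;> simp_all
  have h := finrank_span_eq_card hli
  have hr : Set.range ![p, q] = ({p, q} : Set M) := by
    ext x
    simp [Matrix.range_cons, Matrix.range_empty, or_comm]
  rw [hr] at h
  simpa using h

lemma card_filter_nsmul {α : Type*} (p : α → Prop) [DecidablePred p] (n : ℕ) (s : Multiset α) :
    Multiset.card ((n • s).filter p) = n * Multiset.card (s.filter p) := by
  induction n with
  | zero => simp
  | succ k ih => rw [succ_nsmul, Multiset.filter_add, Multiset.card_add, ih]; ring

open scoped Classical in
/-- For `r > a ≥ 2` with `r ≡ a (mod 2)` and `σ ≥ 1`, the expression `σ[r] - σ[a]` is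
partitionable: there is a multiset of lines covering each point outside the `a`-dimensional
subspace `A` exactly `σ` times and each point of `A` zero times. -/
theorem partitionable_sigma_r_minus_sigma_a (r a : ℕ) (ha : 2 ≤ a) (har : a < r)
    (hmod : r % 2 = a % 2) (σ : ℕ) (hσ : 1 ≤ σ)
    (A : Submodule (ZMod 2) (Vec r)) (hA : Module.finrank (ZMod 2) A = a) :
    ∃ S : Multiset (Submodule (ZMod 2) (Vec r)), (∀ L ∈ S, isLine L) ∧
      ∀ v : Vec r, v ≠ 0 → lineCountThrough S v = if v ∈ A then 0 else σ := by
  classical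
  have hfact : Fact (Nat.Prime 2) := ⟨Nat.prime_two⟩
  set K := GaloisField 2 a with hK
  set F := GaloisField 2 (r - a) with hF
  haveI : Fintype K := Fintype.ofFinite K
  haveI : Fintype F := Fintype.ofFinite F
  -- c in K
  have hcardK : Fintype.card K = 2 ^ a := by
    have := GaloisField.card 2 a (by omega)
    simpa [Nat.card_eq_fintype_card] using this
  have h2K : (2 : K) = 0 := by
    have : CharP K 2 := inferInstance
    exact CharP.cast_eq_zero K 2
  obtain ⟨c, hc0, hc1⟩ : ∃ c : K, c ≠ 0 ∧ c ≠ 1 := by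
    by_contra h
    push_neg at h
    have hsub : (Finset.univ : Finset K) ⊆ {0, 1} := by
      intro x _
      rcases eq_or_ne x 0 with h0 | h0
      · simp [h0]
      · simp [h x h0]
    have := Finset.card_le_card hsub
    have h01 : ({0, 1} : Finset K).card ≤ 2 := Finset.card_insert_le _ _ |>.trans (by simp)
    have h4 : 4 ≤ 2 ^ a := by
      calc (4:ℕ) = 2^2 := by norm_num
      _ ≤ 2^a := Nat.pow_le_pow_right (by norm_num) ha
    rw [Finset.card_univ, hcardK] at this
    omega
  have hc1' : (1 : K) + c ≠ 0 := by
    intro h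
    exact hc1 (by linear_combination h - h2K)
  -- ω in F
  have h2F : (2 : F) = 0 := CharP.cast_eq_zero F 2
  have hcardF : Fintype.card F = 2 ^ (r - a) := by
    have := GaloisField.card 2 (r - a) (by omega)
    simpa [Nat.card_eq_fintype_card] using this
  have h3dvd : 3 ∣ Fintype.card Fˣ := by
    rw [Fintype.card_units, hcardF]
    obtain ⟨k, hk⟩ : ∃ k, r - a = 2 * k := ⟨(r-a)/2, by omega⟩
    rw [hk, pow_mul]
    have h1 : (2^2)^k % 3 = 1 := by
      rw [Nat.pow_mod]
      simp
    have h2 : 1 ≤ (2^2)^k := Nat.one_le_pow _ _ (by norm_num)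
    omega
  obtain ⟨u, hu⟩ := exists_prime_orderOf_dvd_card (G := Fˣ) 3 h3dvd
  set ω : F := (u : F) with hωdef
  have hω3 : ω ^ 3 = 1 := by
    have : u ^ 3 = 1 := by rw [← hu]; exact pow_orderOf_eq_one u
    have := congrArg (Units.val) this
    simpa [hωdef] using this
  have hωne1 : ω ≠ 1 := by
    intro h
    have : u = 1 := Units.ext (by simpa [hωdef] using h)
    rw [this] at hu
    simp at hu
  have hωne0 : ω ≠ 0 := u.ne_zero
  have hω2 : ω ^ 2 + ω + 1 = 0 := by
    have key : (ω + 1) * (ω ^ 2 + ω + 1) = 0 := by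
      linear_combination hω3 + (ω ^ 2 + ω + 1) * h2F
    rcases mul_eq_zero.mp key with h | h
    · exact absurd (by linear_combination h - h2F) hωne1
    · exact h
  have hω1 : (1 : F) + ω ≠ 0 := by
    intro h
    exact hωne1 (by linear_combination h - h2F)
  have hω2ne1 : ω ^ 2 ≠ 1 := by
    intro h
    exact hωne1 (by linear_combination hω3 - ω * h)
  -- orbit representatives
  have rel_equiv : Equivalence (fun x y : F => y = x ∨ y = ω * x ∨ y = ω ^ 2 * x) := by
    constructor
    · intro x; exact Or.inl rfl
    · rintro x y (rfl | rfl | rfl)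
      · exact Or.inl rfl
      · exact Or.inr (Or.inr (by linear_combination (-x) * hω3))
      · exact Or.inr (Or.inl (by linear_combination (-x) * hω3))
    · rintro x y z (rfl | rfl | rfl) (rfl | rfl | rfl)
      · exact Or.inl rfl
      · exact Or.inr (Or.inl rfl)
      · exact Or.inr (Or.inr rfl)
      · exact Or.inr (Or.inl rfl)
      · exact Or.inr (Or.inr (by ring))
      · exact Or.inl (by linear_combination x * hω3)
      · exact Or.inr (Or.inr rfl)
      · exact Or.inl (by linear_combination x * hω3)
      · exact Or.inr (Or.inl (by linear_combination (ω * x) * hω3))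
  let sd : Setoid F := ⟨_, rel_equiv⟩
  let rep : F → F := fun x => (Quotient.mk sd x).out
  have rep_eq : ∀ x y : F, (y = x ∨ y = ω * x ∨ y = ω ^ 2 * x) → rep x = rep y := by
    intro x y h
    exact congrArg Quotient.out (Quotient.sound h)
  have rep_mem : ∀ x : F, rep x = x ∨ rep x = ω * x ∨ rep x = ω ^ 2 * x := by
    intro x
    have h : x = rep x ∨ x = ω * rep x ∨ x = ω ^ 2 * rep x := Quotient.mk_out (s := sd) x
    rcases h with h | h | h
    · exact Or.inl h.symm
    · exact Or.inr (Or.inr (by linear_combination (-(ω^2)) * h - (rep x) * hω3))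
    · exact Or.inr (Or.inl (by linear_combination (-ω) * h - (rep x) * hω3))
  have rep_const : ∀ x : F, rep (ω * x) = rep x :=
    fun x => (rep_eq x (ω * x) (Or.inr (Or.inl rfl))).symm
  have rep_const2 : ∀ x : F, rep (ω ^ 2 * x) = rep x := by
    intro x
    rw [show ω ^ 2 * x = ω * (ω * x) by ring, rep_const, rep_const]
  -- the linear equivalence
  obtain ⟨B, hAB⟩ := Submodule.exists_isCompl A
  have hrankV : Module.finrank (ZMod 2) (Vec r) = r := Module.finrank_fin_fun (ZMod 2)
  have hB : Module.finrank (ZMod 2) B = r - a := by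
    have h := Submodule.finrank_add_eq_of_isCompl hAB
    rw [hA, hrankV] at h
    omega
  let eK : K ≃ₗ[ZMod 2] A := LinearEquiv.ofFinrankEq _ _
    (by rw [hA]; exact GaloisField.finrank 2 (by omega))
  let eF : F ≃ₗ[ZMod 2] B := LinearEquiv.ofFinrankEq _ _
    (by rw [hB]; exact GaloisField.finrank 2 (by omega))
  let e : (K × F) ≃ₗ[ZMod 2] Vec r := (eK.prodCongr eF).trans (Submodule.prodEquivOfIsCompl A B hAB)
  have he : ∀ uw : K × F, e uw = (eK uw.1 : Vec r) + (eF uw.2 : Vec r) := fun _ => rfl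
  have hmemA : ∀ uw : K × F, e uw ∈ A ↔ uw.2 = 0 := by
    rintro ⟨u0, w0⟩
    rw [he]
    constructor
    · intro h
      have h1 : ((eF w0 : Vec r)) ∈ A := by
        have h' := A.sub_mem h (SetLike.coe_mem (eK u0))
        simpa using h'
      have h0 : ((eF w0 : Vec r)) = 0 :=
        Submodule.disjoint_def.mp hAB.disjoint _ h1 (SetLike.coe_mem (eF w0))
      have : eF w0 = 0 := by exact_mod_cast Submodule.coe_eq_zero.mp h0
      simpa using eF.map_eq_zero_iff.mp this
    · rintro rfl
      simp only [map_zero, ZeroMemClass.coe_zero, add_zero]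
      exact SetLike.coe_mem (eK u0)
  have hfrom0 : ∀ uw : K × F, uw.2 ≠ 0 → e uw ≠ 0 := by
    intro uw hw h
    apply hw
    have h0 : uw = 0 := e.map_eq_zero_iff.mp h
    rw [h0]
    rfl
  -- the multiset of lines
  set f : K × F → Submodule (ZMod 2) (Vec r) := fun uw =>
    Submodule.span (ZMod 2) {e uw, e (c * uw.1, ω * uw.2)} with hf
  set J : Multiset (K × F) :=
    Multiset.filter (fun uw : K × F => uw.2 ≠ 0 ∧ rep uw.2 = uw.2) Finset.univ.val with hJ
  have hJmem : ∀ uw : K × F, uw ∈ J → uw.2 ≠ 0 ∧ rep uw.2 = uw.2 := by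
    intro uw huw
    exact (Multiset.mem_filter.mp huw).2
  refine ⟨(σ • J).map f, ?_, ?_⟩
  · -- every member is a line
    intro L hL
    obtain ⟨uw, huw, rfl⟩ := Multiset.mem_map.mp hL
    have huwJ : uw ∈ J := (Multiset.mem_nsmul.mp huw).2
    obtain ⟨hw, -⟩ := hJmem uw huwJ
    have hp : e uw ≠ 0 := hfrom0 uw hw
    have hq : e (c * uw.1, ω * uw.2) ≠ 0 := hfrom0 _ (mul_ne_zero hωne0 hw)
    have hpq : e uw + e (c * uw.1, ω * uw.2) ≠ 0 := by
      rw [← map_add]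
      apply hfrom0
      show uw.2 + ω * uw.2 ≠ 0
      rw [show uw.2 + ω * uw.2 = (1 + ω) * uw.2 by ring]
      exact mul_ne_zero hω1 hw
    exact finrank_span_pair_zmod2 hp hq hpq
  · -- the counting
    intro v hv
    set uw₀ := e.symm v with huw₀
    have hev : e uw₀ = v := e.apply_symm_apply v
    have hvA : v ∈ A ↔ uw₀.2 = 0 := by rw [← hev]; exact hmemA uw₀
    have hmemf : ∀ uw : K × F, uw.2 ≠ 0 → (v ∈ f uw ↔
        (uw₀ = uw ∨ uw₀ = (c * uw.1, ω * uw.2) ∨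
          uw₀ = (uw.1 + c * uw.1, uw.2 + ω * uw.2))) := by
      intro uw hw
      rw [show f uw = Submodule.span (ZMod 2) {e uw, e (c * uw.1, ω * uw.2)} from rfl,
        mem_span_pair_zmod2]
      constructor
      · rintro (h | h | h | h)
        · exact absurd h hv
        · exact Or.inl (e.injective (by rw [hev]; exact h))
        · exact Or.inr (Or.inl (e.injective (by rw [hev]; exact h)))
        · refine Or.inr (Or.inr (e.injective ?_))
          rw [hev, h, ← map_add]
          rfl
      · rintro (h | h | h)
        · exact Or.inr (Or.inl (by rw [← hev, h]))
        · exact Or.inr (Or.inr (Or.inl (by rw [← hev, h])))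
        · refine Or.inr (Or.inr (Or.inr ?_))
          rw [← hev, h, ← map_add]
          rfl
    have hcount : lineCountThrough ((σ • J).map f) v
        = σ * Multiset.card (J.filter (fun uw => v ∈ f uw)) := by
      unfold lineCountThrough
      rw [Multiset.filter_map, Multiset.card_map, card_filter_nsmul]
      rfl
    rw [hcount]
    by_cases ht : uw₀.2 = 0
    · rw [if_pos (hvA.mpr ht)]
      have hnil : J.filter (fun uw => v ∈ f uw) = 0 := by
        rw [Multiset.filter_eq_nil]
        intro uw huw hvf
        obtain ⟨hw, -⟩ := hJmem uw huw
        rcases (hmemf uw hw).mp hvf with h | h | h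
        · exact hw (by rw [← h]; exact ht)
        · have h2 : uw₀.2 = ω * uw.2 := congrArg Prod.snd h
          exact mul_ne_zero hωne0 hw (by rw [← h2]; exact ht)
        · have h2 : uw₀.2 = uw.2 + ω * uw.2 := congrArg Prod.snd h
          have h3 : (1 + ω) * uw.2 = 0 := by rw [← ht, h2]; ring
          exact mul_ne_zero hω1 hw h3
      rw [hnil]
      simp
    · rw [if_neg (fun h => ht (hvA.mp h))]
      have d1 : ω * uw₀.2 ≠ uw₀.2 := fun h =>
        hωne1 (mul_right_cancel₀ ht (h.trans (one_mul uw₀.2).symm))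
      have d2 : ω ^ 2 * uw₀.2 ≠ uw₀.2 := fun h =>
        hω2ne1 (mul_right_cancel₀ ht (h.trans (one_mul uw₀.2).symm))
      have d3 : ω ^ 2 * uw₀.2 ≠ ω * uw₀.2 := by
        intro h
        have h' : ω ^ 2 = ω := mul_right_cancel₀ ht h
        exact hωne1 (mul_left_cancel₀ hωne0 (by rw [mul_one, ← sq]; exact h'))
      have sol2 : ∀ w : F, uw₀.2 = ω * w → w = ω ^ 2 * uw₀.2 := fun w h => by
        linear_combination (-(ω ^ 2)) * h - w * hω3
      have sol3 : ∀ w : F, uw₀.2 = w + ω * w → w = ω * uw₀.2 := fun w h => by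
        linear_combination (-ω) * h + w * h2F - w * hω2
      suffices hcard : Multiset.card (J.filter (fun uw => v ∈ f uw)) = 1 by
        rw [hcard, mul_one]
      have hJf : J.filter (fun uw => v ∈ f uw)
          = (Finset.filter (fun uw : K × F =>
              v ∈ f uw ∧ (uw.2 ≠ 0 ∧ rep uw.2 = uw.2)) Finset.univ).val := by
        rw [hJ, Multiset.filter_filter, Finset.filter_val]
      rw [hJf]
      show (Finset.filter (fun uw : K × F =>
          v ∈ f uw ∧ (uw.2 ≠ 0 ∧ rep uw.2 = uw.2)) Finset.univ).card = 1
      rw [Finset.card_eq_one]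
      rcases rep_mem uw₀.2 with hρ | hρ | hρ
      · -- representative is uw₀.2 itself
        refine ⟨uw₀, Finset.eq_singleton_iff_unique_mem.mpr ⟨?_, ?_⟩⟩
        · rw [Finset.mem_filter]
          exact ⟨Finset.mem_univ _, (hmemf uw₀ ht).mpr (Or.inl rfl), ht, hρ⟩
        · intro y hy
          obtain ⟨-, hvf, hw, hrep⟩ := Finset.mem_filter.mp hy
          rcases (hmemf y hw).mp hvf with h | h | h
          · exact h.symm
          · have h2 : uw₀.2 = ω * y.2 := congrArg Prod.snd h
            have hy2 : y.2 = ω ^ 2 * uw₀.2 := sol2 y.2 h2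
            rw [hy2, rep_const2, hρ] at hrep
            exact absurd hrep.symm d2
          · have h2 : uw₀.2 = y.2 + ω * y.2 := congrArg Prod.snd h
            have hy2 : y.2 = ω * uw₀.2 := sol3 y.2 h2
            rw [hy2, rep_const, hρ] at hrep
            exact absurd hrep.symm d1
      · -- representative is ω * uw₀.2
        refine ⟨((1 + c)⁻¹ * uw₀.1, ω * uw₀.2), Finset.eq_singleton_iff_unique_mem.mpr ⟨?_, ?_⟩⟩
        · rw [Finset.mem_filter]
          refine ⟨Finset.mem_univ _, ?_, mul_ne_zero hωne0 ht, by rw [rep_const, hρ]⟩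
          refine (hmemf _ (mul_ne_zero hωne0 ht)).mpr (Or.inr (Or.inr ?_))
          refine Prod.ext ?_ ?_
          · show uw₀.1 = (1 + c)⁻¹ * uw₀.1 + c * ((1 + c)⁻¹ * uw₀.1)
            linear_combination -(mul_inv_cancel_left₀ hc1' uw₀.1)
          · show uw₀.2 = ω * uw₀.2 + ω * (ω * uw₀.2)
            linear_combination uw₀.2 * h2F - uw₀.2 * hω2
        · intro y hy
          obtain ⟨-, hvf, hw, hrep⟩ := Finset.mem_filter.mp hy
          rcases (hmemf y hw).mp hvf with h | h | h
          · rw [← h] at hrep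
            rw [hρ] at hrep
            exact absurd hrep d1
          · have h2 : uw₀.2 = ω * y.2 := congrArg Prod.snd h
            have hy2 : y.2 = ω ^ 2 * uw₀.2 := sol2 y.2 h2
            rw [hy2, rep_const2, hρ] at hrep
            exact absurd hrep.symm d3
          · have h1 : uw₀.1 = y.1 + c * y.1 := congrArg Prod.fst h
            have h2 : uw₀.2 = y.2 + ω * y.2 := congrArg Prod.snd h
            have hy2 : y.2 = ω * uw₀.2 := sol3 y.2 h2
            have hy1 : y.1 = (1 + c)⁻¹ * uw₀.1 := by
              have h1' : (1 + c) * y.1 = uw₀.1 := by linear_combination -h1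
              rw [← h1', inv_mul_cancel_left₀ hc1']
            exact Prod.ext hy1 hy2
      · -- representative is ω ^ 2 * uw₀.2
        refine ⟨(c⁻¹ * uw₀.1, ω ^ 2 * uw₀.2), Finset.eq_singleton_iff_unique_mem.mpr ⟨?_, ?_⟩⟩
        · rw [Finset.mem_filter]
          refine ⟨Finset.mem_univ _, ?_, mul_ne_zero (pow_ne_zero 2 hωne0) ht,
            by rw [rep_const2, hρ]⟩
          refine (hmemf _ (mul_ne_zero (pow_ne_zero 2 hωne0) ht)).mpr (Or.inr (Or.inl ?_))
          refine Prod.ext ?_ ?_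
          · show uw₀.1 = c * (c⁻¹ * uw₀.1)
            rw [mul_inv_cancel_left₀ hc0]
          · show uw₀.2 = ω * (ω ^ 2 * uw₀.2)
            linear_combination (-uw₀.2) * hω3
        · intro y hy
          obtain ⟨-, hvf, hw, hrep⟩ := Finset.mem_filter.mp hy
          rcases (hmemf y hw).mp hvf with h | h | h
          · rw [← h] at hrep
            rw [hρ] at hrep
            exact absurd hrep d2
          · have h1 : uw₀.1 = c * y.1 := congrArg Prod.fst h
            have h2 : uw₀.2 = ω * y.2 := congrArg Prod.snd h
            have hy2 : y.2 = ω ^ 2 * uw₀.2 := sol2 y.2 h2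
            have hy1 : y.1 = c⁻¹ * uw₀.1 := by rw [h1, inv_mul_cancel_left₀ hc0]
            exact Prod.ext hy1 hy2
          · have h2 : uw₀.2 = y.2 + ω * y.2 := congrArg Prod.snd h
            have hy2 : y.2 = ω * uw₀.2 := sol3 y.2 h2
            rw [hy2, rep_const, hρ] at hrep
            exact absurd hrep d3
end

section
/- If x[r] − Σ_{i=2}^{r-1} ε_i[i] is partitionable for x = σ and for x = σ', then σ ≡ σ' (mod 3/(2^{gcd(r,2)} − 1)); moreover (σ + t·3/(2^{gcd(r,2)}−1))[r] − Σ_{i=2}^{r-1} ε_i[i] is partitionable for all t ≥ 0. -/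
open scoped Classical in
/-- The multiset `S` of lines has type `σ[r] - ∑_{i=1}^{r-1} ε_i [i]` with respect to the
chain `Flag`: the covered point multiset equals `σ·χ_V - ∑ ε_i·χ_{Flag i}`. -/
def HasType (r : ℕ) (Flag : ℕ → Submodule (ZMod 2) (Vec r)) (σ : ℕ) (ε : ℕ → ℤ)
    (S : Multiset (Submodule (ZMod 2) (Vec r))) : Prop :=
  (∀ L ∈ S, isLine L) ∧
  ∀ v : Vec r, v ≠ 0 → (lineCountThrough S v : ℤ) =
      (σ : ℤ) - ∑ i ∈ Finset.Icc 1 (r - 1), ε i * (if v ∈ Flag i then 1 else 0)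

open Finset

section LineCount

variable {r : ℕ}

lemma lineCountThrough_add (S T : Multiset (Submodule (ZMod 2) (Vec r))) (v : Vec r) :
    lineCountThrough (S + T) v = lineCountThrough S v + lineCountThrough T v := by
  simp [lineCountThrough, Multiset.filter_add]

lemma lineCountThrough_nsmul (S : Multiset (Submodule (ZMod 2) (Vec r))) (n : ℕ) (v : Vec r) :
    lineCountThrough (n • S) v = n * lineCountThrough S v := by
  induction n with
  | zero => simp [lineCountThrough]
  | succ n ih => rw [succ_nsmul, lineCountThrough_add, ih, Nat.succ_mul]

open scoped Classical in
lemma lineCountThrough_singleton (L : Submodule (ZMod 2) (Vec r)) (v : Vec r) :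
    lineCountThrough {L} v = if v ∈ L then 1 else 0 := by
  simp only [lineCountThrough, Multiset.filter_singleton]
  split_ifs <;> rfl

lemma card_filter_ne_zero_vec : #(univ.filter (· ≠ (0 : Vec r))) = 2 ^ r - 1 := by
  simp [Finset.filter_ne', Finset.card_erase_of_mem]

open scoped Classical in
lemma card_filter_ne_zero_mem_of_isLine {L : Submodule (ZMod 2) (Vec r)} (hL : isLine L) :
    #((univ.filter (· ≠ (0 : Vec r))).filter (· ∈ L)) = 3 := by
  have hcard : #(univ.filter (· ∈ L)) = 4 := by
    rw [← Fintype.card_subtype, Module.card_eq_pow_finrank (K := ZMod 2) (V := L), hL]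
    rfl
  have hpoints :
      (univ.filter (· ≠ (0 : Vec r))).filter (· ∈ L) = (univ.filter (· ∈ L)).erase 0 := by
    ext v
    simp [and_comm]
  rw [hpoints, Finset.card_erase_of_mem (by simp), hcard]

lemma sum_lineCountThrough {S : Multiset (Submodule (ZMod 2) (Vec r))}
    (hS : ∀ L ∈ S, isLine L) :
    ∑ v ∈ univ.filter (· ≠ 0), lineCountThrough S v = 3 * Multiset.card S := by
  classical
  induction S using Multiset.induction_on with
  | empty => simp [lineCountThrough]
  | cons L S ih =>
    have hL := card_filter_ne_zero_mem_of_isLine (hS L (Multiset.mem_cons_self L S))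
    rw [← Multiset.singleton_add]
    simp only [lineCountThrough_add, lineCountThrough_singleton, Finset.sum_add_distrib,
      ← Finset.card_filter, hL, ih fun L' hL' => hS L' (Multiset.mem_cons_of_mem hL'),
      Multiset.card_add, Multiset.card_singleton]
    ring

end LineCount

/-- A partition of `k[r]` into lines. -/
def IsLineCover {r : ℕ} (k : ℕ) (C : Multiset (Submodule (ZMod 2) (Vec r))) : Prop :=
  (∀ L ∈ C, isLine L) ∧ ∀ v : Vec r, v ≠ 0 → lineCountThrough C v = k

lemma zmod_two_eq_zero_or_one (c : ZMod 2) : c = 0 ∨ c = 1 := by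
  decide +revert

section FieldLine

variable {F : Type*} [Field F] [CharP F 2] [Module (ZMod 2) F] {r : ℕ}
  (e : F ≃ₗ[ZMod 2] Vec r)

noncomputable def fieldLine (α x : F) : Submodule (ZMod 2) (Vec r) :=
  Submodule.span (ZMod 2) {e x, e (α * x)}

omit [CharP F 2] in
lemma mem_fieldLine {α x : F} {v : Vec r} :
    v ∈ fieldLine e α x ↔ v = 0 ∨ v = e x ∨ v = e (α * x) ∨ v = e ((1 + α) * x) := by
  have hsum : e ((1 + α) * x) = e x + e (α * x) := by rw [add_mul, one_mul, map_add]
  rw [fieldLine, Submodule.mem_span_pair, hsum]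
  constructor
  · rintro ⟨a, b, rfl⟩
    rcases zmod_two_eq_zero_or_one a with rfl | rfl <;>
      rcases zmod_two_eq_zero_or_one b with rfl | rfl <;> simp
  · rintro (rfl | rfl | rfl | rfl)
    exacts [⟨0, 0, by simp⟩, ⟨1, 0, by simp⟩, ⟨0, 1, by simp⟩, ⟨1, 1, by simp⟩]

omit [CharP F 2] in
lemma mem_fieldLine_of_ne_zero [DecidableEq F] {α x : F} {v : Vec r} (hv : v ≠ 0) :
    v ∈ fieldLine e α x ↔ ∃ c ∈ ({1, α, 1 + α} : Finset F), e.symm v = c * x := by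
  simp [mem_fieldLine, hv, LinearEquiv.symm_apply_eq]

omit [CharP F 2] in
lemma isLine_fieldLine {α x : F} (hx : x ≠ 0) (hα0 : α ≠ 0) (hα1 : α ≠ 1) :
    isLine (fieldLine e α x) := by
  have hne : e x ≠ e (α * x) := fun h =>
    hα1 (mul_right_cancel₀ hx (by rw [one_mul]; exact (e.injective h).symm))
  have hind : LinearIndependent (ZMod 2) ![e x, e (α * x)] := by
    refine (LinearIndependent.pair_iff' (by simpa using hx)).2 fun a => ?_
    rcases zmod_two_eq_zero_or_one a with rfl | rfl
    · simpa using (e.map_ne_zero_iff.mpr (mul_ne_zero hα0 hx)).symm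
    · simpa using hne
  rw [isLine, fieldLine, ← Matrix.range_cons_cons_empty _ _ ![], finrank_span_eq_card hind,
    Fintype.card_fin]

open scoped Classical in
lemma lineCountThrough_fieldLines [Fintype F] {α : F} (hα0 : α ≠ 0) (hα1 : α ≠ 1)
    {v : Vec r} (hv : v ≠ 0) :
    lineCountThrough ((univ.filter (· ≠ (0 : F))).val.map (fieldLine e α)) v = 3 := by
  have hw : e.symm v ≠ 0 := by simpa using hv
  have h1α : 1 + α ≠ 0 := fun h =>
    hα1 ((eq_neg_of_add_eq_zero_right h).trans (CharTwo.neg_eq 1))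
  have hlines : (univ.filter fun x : F => x ≠ 0 ∧ v ∈ fieldLine e α x) =
      ({1, α, 1 + α} : Finset F).image fun c => c⁻¹ * e.symm v := by
    ext x
    simp only [mem_filter, mem_univ, true_and, mem_image, mem_fieldLine_of_ne_zero e hv]
    constructor
    · rintro ⟨hx, c, hc, hcx⟩
      have hc0 : c ≠ 0 := by rintro rfl; exact hw (by simpa using hcx)
      exact ⟨c, hc, by rw [hcx, inv_mul_cancel_left₀ hc0]⟩
    · rintro ⟨c, hc, rfl⟩
      have hc0 : c ≠ 0 := by
        simp only [mem_insert, mem_singleton] at hc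
        rcases hc with rfl | rfl | rfl
        exacts [one_ne_zero, hα0, h1α]
      exact ⟨by simp [hc0, hw], c, hc, by rw [mul_inv_cancel_left₀ hc0]⟩
  have hinj : Function.Injective fun c : F => c⁻¹ * e.symm v :=
    fun c d h => inv_injective (mul_right_cancel₀ hw h)
  have hα : α ≠ 1 + α := fun h => one_ne_zero (right_eq_add.mp h)
  have h1 : (1 : F) ≠ 1 + α := fun h => hα0 (left_eq_add.mp h)
  rw [lineCountThrough, Multiset.filter_map, Multiset.card_map, ← Finset.filter_val,
    ← Finset.card_def, Finset.filter_filter]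
  simp only [Function.comp_apply]
  rw [hlines, card_image_of_injective _ hinj, card_insert_of_notMem (by simp [hα1.symm, h1]),
    card_insert_of_notMem (by simp [hα]), card_singleton]

lemma fieldLine_mul_self {α : F} (hα : α * α = 1 + α) (x : F) :
    fieldLine e α (α * x) = fieldLine e α x := by
  have h1 : α * (α * x) = (1 + α) * x := by rw [← mul_assoc, hα]
  have h2 : (1 + α) * (α * x) = x := by
    linear_combination x * hα + CharTwo.add_self_eq_zero (α * x)
  ext v
  rw [mem_fieldLine, mem_fieldLine, h1, h2]
  tauto

open scoped Classical in
lemma fieldLine_mul_of_mem {α : F} (hα : α * α = 1 + α) {c : F}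
    (hc : c ∈ ({1, α, 1 + α} : Finset F)) (x : F) :
    fieldLine e α (c * x) = fieldLine e α x := by
  simp only [mem_insert, mem_singleton] at hc
  rcases hc with rfl | rfl | rfl
  · rw [one_mul]
  · exact fieldLine_mul_self e hα x
  · rw [← hα, mul_assoc, fieldLine_mul_self e hα, fieldLine_mul_self e hα]

open scoped Classical in
lemma lineCountThrough_fieldLineSpread [Fintype F] {α : F} (hα : α * α = 1 + α)
    {v : Vec r} (hv : v ≠ 0) :
    lineCountThrough ((univ.filter (· ≠ (0 : F))).image (fieldLine e α)).val v = 1 := by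
  have hw : e.symm v ≠ 0 := by simpa using hv
  have hlines : ((univ.filter (· ≠ (0 : F))).image (fieldLine e α)).filter (v ∈ ·) =
      {fieldLine e α (e.symm v)} := by
    ext L
    simp only [mem_filter, mem_image, mem_univ, true_and, mem_singleton]
    constructor
    · rintro ⟨⟨x, -, rfl⟩, hvL⟩
      obtain ⟨c, hc, hcx⟩ := (mem_fieldLine_of_ne_zero e hv).1 hvL
      rw [hcx, fieldLine_mul_of_mem e hα hc]
    · rintro rfl
      exact ⟨⟨_, hw, rfl⟩, (mem_fieldLine_of_ne_zero e hv).2 ⟨1, by simp, (one_mul _).symm⟩⟩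
  rw [lineCountThrough, ← Finset.filter_val, ← Finset.card_def, hlines, card_singleton]

end FieldLine

section Covers

variable {r : ℕ}

lemma nonempty_linearEquiv_galoisField (hr : r ≠ 0) :
    Nonempty (GaloisField 2 r ≃ₗ[ZMod 2] Vec r) :=
  ⟨LinearEquiv.ofFinrankEq _ _ (by simp [GaloisField.finrank 2 hr])⟩

lemma card_galoisField (hr : r ≠ 0) [Fintype (GaloisField 2 r)] :
    Fintype.card (GaloisField 2 r) = 2 ^ r := by
  rw [← Nat.card_eq_fintype_card, GaloisField.card 2 r hr]

open scoped Classical in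
lemma exists_isLineCover_three (hr : 2 ≤ r) :
    ∃ C : Multiset (Submodule (ZMod 2) (Vec r)), IsLineCover 3 C := by
  obtain ⟨e⟩ := nonempty_linearEquiv_galoisField (r := r) (by omega)
  let _ := Fintype.ofFinite (GaloisField 2 r)
  obtain ⟨α, -, hα⟩ : ∃ α ∈ (univ : Finset (GaloisField 2 r)), α ∉ ({0, 1} : Finset _) := by
    apply exists_mem_notMem_of_card_lt_card
    calc #({0, 1} : Finset (GaloisField 2 r)) ≤ 2 := card_le_two
      _ < 2 ^ r := by
        calc 2 < 2 ^ 2 := by norm_num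
          _ ≤ 2 ^ r := Nat.pow_le_pow_right two_pos hr
      _ = #univ := by rw [card_univ, card_galoisField (by omega)]
  simp only [mem_insert, mem_singleton, not_or] at hα
  refine ⟨(univ.filter (· ≠ 0)).val.map (fieldLine e α), ?_,
    fun v hv => lineCountThrough_fieldLines e hα.1 hα.2 hv⟩
  simp only [Multiset.mem_map, mem_val, mem_filter, mem_univ, true_and]
  rintro _ ⟨x, hx, rfl⟩
  exact isLine_fieldLine e hx hα.1 hα.2

open scoped Classical in
lemma exists_isLineCover_one (hr : Even r) (hr0 : r ≠ 0) :
    ∃ C : Multiset (Submodule (ZMod 2) (Vec r)), IsLineCover 1 C := by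
  obtain ⟨e⟩ := nonempty_linearEquiv_galoisField hr0
  let _ := Fintype.ofFinite (GaloisField 2 r)
  have h3 : 3 ∣ Fintype.card (GaloisField 2 r)ˣ := by
    rw [Fintype.card_units, card_galoisField hr0]
    obtain ⟨k, rfl⟩ := hr
    rw [← two_mul, pow_mul]
    have h := Nat.sub_dvd_pow_sub_pow (2 ^ 2) 1 k
    rwa [one_pow] at h
  have : Fact (Nat.Prime 3) := ⟨Nat.prime_three⟩
  obtain ⟨u, hu⟩ := exists_prime_orderOf_dvd_card 3 h3
  set α : GaloisField 2 r := ↑u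
  have hα1 : α ≠ 1 := by
    rw [Ne, Units.val_eq_one]
    rintro rfl
    simp at hu
  have hα3 : α ^ 3 = 1 := by
    rw [← Units.val_pow_eq_pow_val, ← hu, pow_orderOf_eq_one, Units.val_one]
  have hcyc : α * α + α + 1 = 0 := by
    have h : (α - 1) * (α * α + α + 1) = 0 := by linear_combination hα3
    exact (mul_eq_zero.mp h).resolve_left (sub_ne_zero.mpr hα1)
  have hsq : α * α = 1 + α := by
    linear_combination hcyc - CharTwo.add_self_eq_zero (1 + α)
  refine ⟨((univ.filter (· ≠ 0)).image (fieldLine e α)).val, ?_,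
    fun v hv => lineCountThrough_fieldLineSpread e hsq hv⟩
  simp only [mem_val, mem_image, mem_filter, mem_univ, true_and]
  rintro _ ⟨x, hx, rfl⟩
  exact isLine_fieldLine e hx u.ne_zero hα1

end Covers

section HasType

variable {r : ℕ} {Flag : ℕ → Submodule (ZMod 2) (Vec r)} {σ σ' : ℕ} {ε : ℕ → ℤ}
  {S S' : Multiset (Submodule (ZMod 2) (Vec r))}

lemma HasType.add_nsmul (hS : HasType r Flag σ ε S) {k : ℕ}
    {C : Multiset (Submodule (ZMod 2) (Vec r))} (hC : IsLineCover k C) (t : ℕ) :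
    HasType r Flag (σ + t * k) ε (S + t • C) := by
  refine ⟨fun L hL => ?_, fun v hv => ?_⟩
  · rcases Multiset.mem_add.mp hL with h | h
    exacts [hS.1 L h, hC.1 L (Multiset.mem_of_mem_nsmul h)]
  · rw [lineCountThrough_add, lineCountThrough_nsmul, hC.2 v hv]
    push_cast
    rw [hS.2 v hv]
    ring

open scoped Classical in
lemma HasType.three_mul_card (hS : HasType r Flag σ ε S) :
    3 * (Multiset.card S : ℤ) = σ * (2 ^ r - 1) -
      ∑ v ∈ univ.filter (· ≠ 0), ∑ i ∈ Icc 1 (r - 1), ε i * if v ∈ Flag i then 1 else 0 := by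
  have hcount := congrArg (Nat.cast : ℕ → ℤ) (sum_lineCountThrough hS.1)
  push_cast at hcount
  rw [← hcount, Finset.sum_congr rfl fun v hv => hS.2 v (mem_filter.mp hv).2, sum_sub_distrib,
    sum_const, card_filter_ne_zero_vec, nsmul_eq_mul]
  push_cast [Nat.one_le_two_pow]
  ring

lemma HasType.three_dvd_sub_mul (hS : HasType r Flag σ ε S) (hS' : HasType r Flag σ' ε S') :
    (3 : ℤ) ∣ ((σ : ℤ) - σ') * (2 ^ r - 1) :=
  ⟨Multiset.card S - Multiset.card S', by
    linear_combination hS'.three_mul_card - hS.three_mul_card⟩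

end HasType

lemma not_three_dvd_two_pow_sub_one {r : ℕ} (hr : Odd r) : ¬ (3 : ℤ) ∣ 2 ^ r - 1 := by
  rw [← Nat.cast_ofNat, ← ZMod.intCast_zmod_eq_zero_iff_dvd]
  push_cast
  rw [show (2 : ZMod 3) = -1 by decide, hr.neg_one_pow]
  decide

open scoped Classical in
theorem sigma_congruence_and_shift_general (r : ℕ) (hr : 3 ≤ r)
    (Flag : ℕ → Submodule (ZMod 2) (Vec r))
    (σ σ' : ℕ) (ε : ℕ → ℤ)
    (h1 : ∃ S, HasType r Flag σ ε S) (h2 : ∃ S, HasType r Flag σ' ε S) :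
    ((3 / (2 ^ Nat.gcd r 2 - 1) : ℤ)) ∣ (σ : ℤ) - (σ' : ℤ) ∧
    ∀ t : ℕ, ∃ S, HasType r Flag (σ + t * (3 / (2 ^ Nat.gcd r 2 - 1))) ε S := by
  obtain ⟨S, hS⟩ := h1
  obtain ⟨S', hS'⟩ := h2
  rcases Nat.even_or_odd r with hr2 | hr2
  · rw [Nat.gcd_eq_right (even_iff_two_dvd.mp hr2)]
    obtain ⟨C, hC⟩ := exists_isLineCover_one hr2 (by omega)
    exact ⟨by norm_num, fun t => ⟨S + t • C, hS.add_nsmul hC t⟩⟩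
  · rw [Nat.coprime_two_right.mpr hr2]
    obtain ⟨C, hC⟩ := exists_isLineCover_three (r := r) (by omega)
    refine ⟨?_, fun t => ⟨S + t • C, hS.add_nsmul hC t⟩⟩
    simpa using (Int.prime_three.dvd_or_dvd (hS.three_dvd_sub_mul hS')).resolve_right
      (not_three_dvd_two_pow_sub_one hr2)

open scoped Classical in
/-- If `x[r] - ∑_{i=2}^{r-1} ε_i[i]` is partitionable for `x = σ` and `x = σ'`, then
`σ ≡ σ' (mod 3/(2^{gcd(r,2)}-1))` and `(σ + t·3/(2^{gcd(r,2)}-1))[r] - ∑ ε_i[i]` is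
partitionable for all `t ≥ 0`. -/
theorem sigma_congruence_and_shift (r : ℕ) (hr : 3 ≤ r)
    (Flag : ℕ → Submodule (ZMod 2) (Vec r))
    (hdim : ∀ i ∈ Finset.Icc 1 (r - 1), Module.finrank (ZMod 2) (Flag i) = i)
    (hmono : ∀ i j, 1 ≤ i → i ≤ j → j ≤ r - 1 → Flag i ≤ Flag j)
    (σ σ' : ℕ) (ε : ℕ → ℤ) (hε1 : ε 1 = 0)
    (h1 : ∃ S, HasType r Flag σ ε S) (h2 : ∃ S, HasType r Flag σ' ε S) :
    ((3 / (2 ^ Nat.gcd r 2 - 1) : ℤ)) ∣ (σ : ℤ) - (σ' : ℤ) ∧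
    ∀ t : ℕ, ∃ S, HasType r Flag (σ + t * (3 / (2 ^ Nat.gcd r 2 - 1))) ε S :=
  sigma_congruence_and_shift_general r hr Flag σ σ' ε h1 h2
end
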